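/- arXiv:1008.4971 — 11 statements merged into one kernel-verified Lean document; each statement's English description precedes it below -/
import Mathlib

section
/- Let C', C'' ⊆ ℝⁿ be convex polytopes, C = C' + C'', and let D = C_a be a face of C (the minimizer set of ⟨·, a⟩). Then Φ(D) := {x ∈ C' : ∃ y ∈ C'', x + y ∈ D} equals C'_a, and Ψ(D) := {y ∈ C'' : ∃ x ∈ C', x + y ∈ D} equals C''_a. -/
/-!
A linear functional `f` is additive, so on `C' + C''` its minimum is the sum of its minima on
`C'` and on `C''`, both attained since polytopes are compact. Hence `f (x + y)` equals the
minimum on `C' + C''` exactly when `f x` and `f y` are both minimal.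
-/

open Pointwise

namespace MinkowskiFace

variable {E : Type*} [AddCommMonoid E] (f : E →+ ℝ) {A B : Set E} {a b : ℝ}

theorem isLeast_image_add (ha : IsLeast (f '' A) a) (hb : IsLeast (f '' B) b) :
    IsLeast (f '' (A + B)) (a + b) := by
  rw [Set.image_add]
  exact ⟨Set.add_mem_add ha.1 hb.1, (ha.isGLB.add hb.isGLB).1⟩

theorem map_add_eq_add_iff (ha : IsLeast (f '' A) a) (hb : IsLeast (f '' B) b)
    {x y : E} (hx : x ∈ A) (hy : y ∈ B) : f (x + y) = a + b ↔ f x = a ∧ f y = b := by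
  have hax : a ≤ f x := ha.2 ⟨x, hx, rfl⟩
  have hby : b ≤ f y := hb.2 ⟨y, hy, rfl⟩
  rw [map_add]
  constructor
  · intro h
    constructor <;> linarith
  · rintro ⟨rfl, rfl⟩
    rfl

theorem setOf_exists_add_mem_face_left (ha : IsLeast (f '' A) a) (hb : IsLeast (f '' B) b) :
    {x ∈ A | ∃ y ∈ B, x + y ∈ {z ∈ A + B | f z = a + b}} = {x ∈ A | f x = a} := by
  ext x
  simp only [Set.mem_ofPred_eq]
  constructor
  · rintro ⟨hx, y, hy, -, hxy⟩
    exact ⟨hx, ((map_add_eq_add_iff f ha hb hx hy).1 hxy).1⟩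
  · rintro ⟨hx, hfx⟩
    obtain ⟨y, hy, hfy⟩ := hb.1
    exact ⟨hx, y, hy, Set.add_mem_add hx hy, (map_add_eq_add_iff f ha hb hx hy).2 ⟨hfx, hfy⟩⟩

theorem setOf_exists_add_mem_face_right (ha : IsLeast (f '' A) a) (hb : IsLeast (f '' B) b) :
    {y ∈ B | ∃ x ∈ A, x + y ∈ {z ∈ A + B | f z = a + b}} = {y ∈ B | f y = b} := by
  simp_rw [add_comm _ (_ : E), add_comm A B, add_comm a b]
  exact setOf_exists_add_mem_face_left f hb ha

end MinkowskiFace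

theorem isLeast_sInf_image_convexHull {E : Type*} [AddCommGroup E] [Module ℝ E]
    [TopologicalSpace E] [IsTopologicalAddGroup E] [ContinuousSMul ℝ E]
    {f : E → ℝ} (hf : Continuous f) {s : Finset E} (hs : s.Nonempty) :
    IsLeast (f '' convexHull ℝ ↑s) (sInf (f '' convexHull ℝ ↑s)) :=
  ((s.finite_toSet.isCompact_convexHull ℝ).image hf).isLeast_sInf
    ((hs.to_set.mono (subset_convexHull ℝ _)).image f)

open MinkowskiFace in
theorem stmt2 (n : ℕ) (s' s'' : Finset (Fin n → ℝ)) (h' : s'.Nonempty) (h'' : s''.Nonempty)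
    (a : Fin n → ℝ) (C' C'' C D : Set (Fin n → ℝ))
    (hC' : C' = convexHull ℝ ↑s') (hC'' : C'' = convexHull ℝ ↑s'') (hC : C = C' + C'')
    (hD : D = {x ∈ C | (∑ t, x t * a t) = sInf ((fun x => ∑ t, x t * a t) '' C)}) :
    {x ∈ C' | ∃ y ∈ C'', x + y ∈ D}
      = {x ∈ C' | (∑ t, x t * a t) = sInf ((fun x => ∑ t, x t * a t) '' C')} ∧
    {y ∈ C'' | ∃ x ∈ C', x + y ∈ D}
      = {y ∈ C'' | (∑ t, y t * a t) = sInf ((fun x => ∑ t, x t * a t) '' C'')} := by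
  let f : (Fin n → ℝ) →+ ℝ := AddMonoidHom.mk' (· ⬝ᵥ a) fun x y => add_dotProduct x y a
  have hf : Continuous f := by
    show Continuous fun x : Fin n → ℝ => ∑ t, x t * a t
    fun_prop
  have hmin' := isLeast_sInf_image_convexHull hf h'
  have hmin'' := isLeast_sInf_image_convexHull hf h''
  subst hC' hC'' hC hD
  rw [show (fun x : Fin n → ℝ => ∑ t, x t * a t) = f from rfl,
    (isLeast_image_add f hmin' hmin'').csInf_eq]
  exact ⟨setOf_exists_add_mem_face_left f hmin' hmin'',
    setOf_exists_add_mem_face_right f hmin' hmin''⟩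
end

section
/- Let C', C'' be convex polytopes with C = C' + C'', and let D be a face of C. Then D = Φ(D) + Ψ(D), where Φ(D) = {x ∈ C' : ∃ y ∈ C'', x + y ∈ D} and Ψ(D) = {y ∈ C'' : ∃ x ∈ C', x + y ∈ D}; moreover this is the unique way to write D as X + Y with X, Y convex, X ⊆ C', Y ⊆ C''. -/
/-!
A linear functional attains its minimum on `C' + C''` at `x + y` exactly when it attains its
minimum on `C'` at `x` and on `C''` at `y`; hence the face `D` is the sum of the corresponding faces
of `C'` and `C''`, and these are `Φ(D)` and `Ψ(D)`.

For uniqueness, let `X + Y = P + Q` with `X ⊆ P` convex, `Y ⊆ Q`, `P` a polytope and `Q` compact.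
Every vertex `v` of `P` is exposed by some functional `l`; if `q` maximizes `l` on `Q`, then any
decomposition `v + q = x + y` with `x ∈ P`, `y ∈ Q` forces `x = v`. So `X` contains the vertices
of `P`, and `X = P` by Krein–Milman.
-/

open Set Pointwise

namespace ContinuousLinearMap

variable {E : Type*} [AddCommGroup E] [TopologicalSpace E] [Module ℝ E]
  (l : StrongDual ℝ E) {A B : Set E} {x y : E}

lemma mem_toExposed_left_of_add_mem (hx : x ∈ A) (hy : y ∈ B)
    (h : x + y ∈ l.toExposed (A + B)) : x ∈ l.toExposed A :=
  ⟨hx, fun x' hx' => by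
    have := h.2 (x' + y) (add_mem_add hx' hy)
    simp only [map_add] at this
    linarith⟩

lemma mem_toExposed_right_of_add_mem (hx : x ∈ A) (hy : y ∈ B)
    (h : x + y ∈ l.toExposed (A + B)) : y ∈ l.toExposed B :=
  ⟨hy, fun y' hy' => by
    have := h.2 (x + y') (add_mem_add hx hy')
    simp only [map_add] at this
    linarith⟩

lemma add_mem_toExposed (hx : x ∈ l.toExposed A) (hy : y ∈ l.toExposed B) :
    x + y ∈ l.toExposed (A + B) := by
  refine ⟨add_mem_add hx.1 hy.1, ?_⟩
  rintro _ ⟨x', hx', y', hy', rfl⟩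
  simp only [map_add]
  linarith [hx.2 x' hx', hy.2 y' hy']

lemma toExposed_add : l.toExposed (A + B) = l.toExposed A + l.toExposed B := by
  refine Subset.antisymm (fun z hz => ?_) ?_
  · obtain ⟨x, hx, y, hy, rfl⟩ := hz.1
    exact add_mem_add (l.mem_toExposed_left_of_add_mem hx hy hz)
      (l.mem_toExposed_right_of_add_mem hx hy hz)
  · rintro _ ⟨x, hx, y, hy, rfl⟩
    exact l.add_mem_toExposed hx hy

lemma setOf_exists_add_mem_toExposed_left (hB : (l.toExposed B).Nonempty) :
    {x ∈ A | ∃ y ∈ B, x + y ∈ l.toExposed (A + B)} = l.toExposed A := by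
  refine Subset.antisymm (fun x ⟨hx, y, hy, h⟩ => l.mem_toExposed_left_of_add_mem hx hy h)
    (fun x hx => ?_)
  obtain ⟨y, hy⟩ := hB
  exact ⟨hx.1, y, hy.1, l.add_mem_toExposed hx hy⟩

lemma setOf_exists_add_mem_toExposed_right (hA : (l.toExposed A).Nonempty) :
    {y ∈ B | ∃ x ∈ A, x + y ∈ l.toExposed (A + B)} = l.toExposed B := by
  refine Subset.antisymm (fun y ⟨hy, x, hx, h⟩ => l.mem_toExposed_right_of_add_mem hx hy h)
    (fun y hy => ?_)
  obtain ⟨x, hx⟩ := hA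
  exact ⟨hy.1, x, hx.1, l.add_mem_toExposed hx hy⟩

lemma toExposed_nonempty (hA : IsCompact A) (hne : A.Nonempty) : (l.toExposed A).Nonempty := by
  obtain ⟨x, hx, hmax⟩ := hA.exists_isMaxOn hne l.continuous.continuousOn
  exact ⟨x, hx, fun y hy => hmax hy⟩

lemma setOf_eq_sInf_eq_toExposed_neg (hA : BddBelow (l '' A)) :
    {x ∈ A | l x = sInf (l '' A)} = (-l).toExposed A := by
  ext x
  simp only [toExposed, mem_ofPred_eq, neg_apply, neg_le_neg_iff]
  refine and_congr_right fun hx => ⟨fun h y hy => h ▸ csInf_le hA (mem_image_of_mem l hy),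
    fun h => (IsLeast.csInf_eq ⟨mem_image_of_mem l hx, ?_⟩).symm⟩
  rintro _ ⟨y, hy, rfl⟩
  exact h y hy

end ContinuousLinearMap

variable {E : Type*} [NormedAddCommGroup E] [NormedSpace ℝ E]

lemma convexHull_extremePoints_of_finite {P : Set E} (hP : IsCompact P) (hPc : Convex ℝ P)
    (hfin : (P.extremePoints ℝ).Finite) : convexHull ℝ (P.extremePoints ℝ) = P :=
  (hfin.isCompact_convexHull ℝ).isClosed.closure_eq.symm.trans
    (closure_convexHull_extremePoints hP hPc)

def IsPolytope (P : Set E) : Prop :=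
  ∃ s : Set E, s.Finite ∧ convexHull ℝ s = P

namespace IsPolytope

variable {P X Y Q : Set E}

lemma isCompact (hP : IsPolytope P) : IsCompact P := by
  obtain ⟨s, hs, rfl⟩ := hP
  exact hs.isCompact_convexHull ℝ

lemma convex (hP : IsPolytope P) : Convex ℝ P := by
  obtain ⟨s, -, rfl⟩ := hP
  exact convex_convexHull ℝ s

lemma finite_extremePoints (hP : IsPolytope P) : (P.extremePoints ℝ).Finite := by
  obtain ⟨s, hs, rfl⟩ := hP
  exact hs.subset extremePoints_convexHull_subset

lemma convexHull_extremePoints (hP : IsPolytope P) : convexHull ℝ (P.extremePoints ℝ) = P :=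
  convexHull_extremePoints_of_finite hP.isCompact hP.convex hP.finite_extremePoints

lemma toExposed (hP : IsPolytope P) (l : StrongDual ℝ E) : IsPolytope (l.toExposed P) := by
  have hF : IsExposed ℝ P (l.toExposed P) := ContinuousLinearMap.toExposed.isExposed
  have hfin := hP.finite_extremePoints.subset hF.isExtreme.extremePoints_subset_extremePoints
  exact ⟨_, hfin, convexHull_extremePoints_of_finite (hF.isCompact hP.isCompact)
    (hF.convex hP.convex) hfin⟩

lemma extremePoints_subset_exposedPoints (hP : IsPolytope P) :
    P.extremePoints ℝ ⊆ P.exposedPoints ℝ := by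
  obtain ⟨s, hs, rfl⟩ := hP
  intro v hv
  have hvs : v ∈ s := extremePoints_convexHull_subset hv
  -- `v` is strictly separated from the hull of the other generators.
  have hvK : v ∉ convexHull ℝ (s \ {v}) := fun hvK =>
    (convexHull_min (sdiff_subset_sdiff_left (subset_convexHull ℝ s))
      ((convex_convexHull ℝ s).mem_extremePoints_iff_convex_sdiff.1 hv).2 hvK).2 rfl
  obtain ⟨l, u, hlK, hlv⟩ := geometric_hahn_banach_closed_point (convex_convexHull ℝ _)
    (hs.sdiff.isCompact_convexHull ℝ).isClosed hvK
  refine ⟨hv.1, l, fun y hy => ?_⟩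
  rcases (s \ {v}).eq_empty_or_nonempty with hK | hK
  · have hsv : s ⊆ {v} := sdiff_eq_empty.1 hK
    obtain rfl : y = v := by simpa using convexHull_mono hsv hy
    exact ⟨le_rfl, fun _ => rfl⟩
  rw [← insert_eq_of_mem hvs, ← insert_sdiff_singleton, convexHull_insert hK,
    convexJoin_singleton_left, mem_iUnion₂] at hy
  obtain ⟨k, hk, a, b, ha, hb, hab, rfl⟩ := hy
  obtain rfl : a = 1 - b := by linarith
  have hd : 0 < l v - l k := by linarith [hlK k hk]
  simp only [map_add, map_smul, smul_eq_mul]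
  refine ⟨by nlinarith [mul_nonneg hb hd.le], fun h => ?_⟩
  obtain rfl : b = 0 := by nlinarith [mul_nonneg hb hd.le]
  simp

lemma eq_of_add_eq_add_of_subset (hP : IsPolytope P) (hQ : IsCompact Q) (hQne : Q.Nonempty)
    (hX : Convex ℝ X) (hXP : X ⊆ P) (hYQ : Y ⊆ Q) (h : X + Y = P + Q) : X = P := by
  refine hXP.antisymm ?_
  rw [← hP.convexHull_extremePoints]
  refine convexHull_min (fun v hv => ?_) hX
  obtain ⟨hvP, l, hl⟩ := hP.extremePoints_subset_exposedPoints hv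
  obtain ⟨q, hq, hqmax⟩ := hQ.exists_isMaxOn hQne l.continuous.continuousOn
  obtain ⟨x, hx, y, hy, hxy⟩ : v + q ∈ X + Y := h ▸ add_mem_add hvP hq
  have hlxy : l x + l y = l v + l q := by rw [← map_add, ← map_add, ← hxy]
  have hly : l y ≤ l q := hqmax (hYQ hy)
  rwa [← (hl x (hXP hx)).2 (by linarith)]

lemma eq_toExposed_of_add_eq_toExposed (l : StrongDual ℝ E) {A B : Set E} (hA : IsPolytope A)
    (hAne : A.Nonempty) (hB : IsCompact B) (hBne : B.Nonempty) (hX : Convex ℝ X)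
    (hXA : X ⊆ A) (hYB : Y ⊆ B) (h : X + Y = l.toExposed (A + B)) : X = l.toExposed A := by
  obtain ⟨⟨x, hx⟩, ⟨y, hy⟩⟩ : X.Nonempty ∧ Y.Nonempty :=
    Set.add_nonempty.1 (h ▸ l.toExposed_nonempty (hA.isCompact.add hB) (hAne.add hBne))
  have hXF : X ⊆ l.toExposed A := fun x' hx' =>
    l.mem_toExposed_left_of_add_mem (hXA hx') (hYB hy) (h ▸ add_mem_add hx' hy)
  have hYF : Y ⊆ l.toExposed B := fun y' hy' =>
    l.mem_toExposed_right_of_add_mem (hXA hx) (hYB hy') (h ▸ add_mem_add hx hy')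
  exact (hA.toExposed l).eq_of_add_eq_add_of_subset
    (ContinuousLinearMap.toExposed.isExposed.isCompact hB) (l.toExposed_nonempty hB hBne) hX hXF
    hYF (h.trans l.toExposed_add)

end IsPolytope

theorem stmt4 (n : ℕ) (s' s'' : Finset (Fin n → ℝ)) (h' : s'.Nonempty) (h'' : s''.Nonempty)
    (C' C'' C : Set (Fin n → ℝ))
    (hC' : C' = convexHull ℝ ↑s') (hC'' : C'' = convexHull ℝ ↑s'') (hC : C = C' + C'')
    (D : Set (Fin n → ℝ))
    (hD : ∃ a : Fin n → ℝ,
      D = {x ∈ C | (∑ t, x t * a t) = sInf ((fun x => ∑ t, x t * a t) '' C)}) :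
    D = {x ∈ C' | ∃ y ∈ C'', x + y ∈ D} + {y ∈ C'' | ∃ x ∈ C', x + y ∈ D} ∧
    ∀ X Y : Set (Fin n → ℝ), Convex ℝ X → Convex ℝ Y → X ⊆ C' → Y ⊆ C'' → X + Y = D →
      X = {x ∈ C' | ∃ y ∈ C'', x + y ∈ D} ∧ Y = {y ∈ C'' | ∃ x ∈ C', x + y ∈ D} := by
  obtain ⟨a, rfl⟩ := hD
  subst hC' hC'' hC
  set l : StrongDual ℝ (Fin n → ℝ) := ∑ t, a t • ContinuousLinearMap.proj t
  have hl : ∀ x : Fin n → ℝ, ∑ t, x t * a t = l x := fun x => by simp [l, mul_comm]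
  have hP' : IsPolytope (convexHull ℝ (s' : Set (Fin n → ℝ))) := ⟨_, s'.finite_toSet, rfl⟩
  have hP'' : IsPolytope (convexHull ℝ (s'' : Set (Fin n → ℝ))) := ⟨_, s''.finite_toSet, rfl⟩
  have hne' := (Finset.coe_nonempty.2 h').convexHull (𝕜 := ℝ)
  have hne'' := (Finset.coe_nonempty.2 h'').convexHull (𝕜 := ℝ)
  simp only [hl]
  rw [l.setOf_eq_sInf_eq_toExposed_neg
      ((hP'.isCompact.add hP''.isCompact).bddBelow_image l.continuous.continuousOn),
    (-l).setOf_exists_add_mem_toExposed_left ((-l).toExposed_nonempty hP''.isCompact hne''),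
    (-l).setOf_exists_add_mem_toExposed_right ((-l).toExposed_nonempty hP'.isCompact hne')]
  refine ⟨(-l).toExposed_add, fun X Y hX hY hXC' hYC'' hXY => ⟨?_, ?_⟩⟩
  · exact hP'.eq_toExposed_of_add_eq_toExposed (-l) hne' hP''.isCompact hne'' hX hXC' hYC'' hXY
  · refine hP''.eq_toExposed_of_add_eq_toExposed (-l) hne'' hP'.isCompact hne' hY hYC'' hXC' ?_
    rwa [add_comm, add_comm (convexHull ℝ _)]
end

section
/- Let C', C'' be convex polytopes with C = C' + C'', and let φ: V(C) → V(C') and ψ: V(C) → V(C'') be the maps sending a vertex v of C to the unique x ∈ C' (resp. y ∈ C'') with x + y = v. Then for every edge [v,w] of C there exists λ ∈ [0,1] with φ(w) − φ(v) = λ(w − v) and ψ(w) − ψ(v) = (1 − λ)(w − v). -/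
/-! Let `f` be a linear functional whose minimum on `C = C' + C''` (which exists, `C` being compact)
is attained exactly on the edge `[v, w]`. If `x + y` and `x' + y'` minimise `f` on `C' + C''`, so
does `x' + y`: `f (x' + y) + f (x + y') = f (x + y) + f (x' + y')` and no term on the left is below
the minimum. Hence `φ w + ψ v` lies on `[v, w]`, at `v + λ (w - v)` say; subtracting
`v = φ v + ψ v` gives `φ w - φ v = λ (w - v)`, and the formula for `ψ` follows from `φ + ψ = id`
on vertices. -/

open Pointwise

theorem IsMinOn.add_swap {E β F : Type*} [AddCommMonoid E] [AddCommMonoid β] [PartialOrder β]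
    [IsOrderedCancelAddMonoid β] [FunLike F E β] [AddHomClass F E β] {f : F} {s t : Set E}
    {x x' y y' : E} (hx : x ∈ s) (hy' : y' ∈ t)
    (h : IsMinOn f (s + t) (x + y)) (h' : IsMinOn f (s + t) (x' + y')) :
    IsMinOn f (s + t) (x' + y) := by
  have hle : f (x' + y') ≤ f (x + y') := h' (Set.add_mem_add hx hy')
  have hsum : f (x' + y) + f (x + y') = f (x + y) + f (x' + y') := by
    simp only [map_add]; abel
  have hge : f (x' + y) ≤ f (x + y) :=
    le_of_add_le_add_right (hsum.le.trans (add_le_add_right hle _))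
  exact fun z hz => hge.trans (h hz)

theorem eq_sInf_image_iff_isMinOn {E : Type*} {f : E → ℝ} {C : Set E} (hC : BddBelow (f '' C))
    {z : E} (hz : z ∈ C) : f z = sInf (f '' C) ↔ IsMinOn f C z :=
  ⟨fun h _ hx => h ▸ csInf_le hC (Set.mem_image_of_mem f hx),
    fun h => (IsLeast.csInf_eq ⟨Set.mem_image_of_mem f hz, Set.forall_mem_image.2 h⟩).symm⟩

theorem exists_sub_eq_smul_of_add_mem_segment {E : Type*} [AddCommGroup E] [Module ℝ E]
    {φ ψ : E → E} {v w : E} (hv : φ v + ψ v = v) (hw : φ w + ψ w = w)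
    (hmix : φ w + ψ v ∈ segment ℝ v w) :
    ∃ lam : ℝ, lam ∈ Set.Icc (0 : ℝ) 1 ∧
      φ w - φ v = lam • (w - v) ∧ ψ w - ψ v = (1 - lam) • (w - v) := by
  rw [segment_eq_image'] at hmix
  obtain ⟨lam, hlam, hmix : v + lam • (w - v) = φ w + ψ v⟩ := hmix
  refine ⟨lam, hlam, ?_, ?_⟩
  · linear_combination (norm := module) -hmix - hv
  · linear_combination (norm := module) hw + hmix

theorem stmt5_general (n : ℕ) (s' s'' : Finset (Fin n → ℝ))
    (C' C'' C : Set (Fin n → ℝ))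
    (hC' : C' = convexHull ℝ ↑s') (hC'' : C'' = convexHull ℝ ↑s'') (hC : C = C' + C'')
    (φ ψ : (Fin n → ℝ) → (Fin n → ℝ))
    (hφψ : ∀ u ∈ Set.extremePoints ℝ C, φ u ∈ C' ∧ ψ u ∈ C'' ∧ φ u + ψ u = u)
    (v w : Fin n → ℝ) (hv : v ∈ Set.extremePoints ℝ C) (hw : w ∈ Set.extremePoints ℝ C)
    (hedge : ∃ a : Fin n → ℝ,
      {x ∈ C | (∑ t, x t * a t) = sInf ((fun x => ∑ t, x t * a t) '' C)} = segment ℝ v w) :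
    ∃ lam : ℝ, lam ∈ Set.Icc (0 : ℝ) 1 ∧
      φ w - φ v = lam • (w - v) ∧ ψ w - ψ v = (1 - lam) • (w - v) := by
  obtain ⟨a, ha⟩ := hedge
  let f : (Fin n → ℝ) →ₗ[ℝ] ℝ :=
    ⟨⟨fun x => x ⬝ᵥ a, fun x y => add_dotProduct x y a⟩, fun c x => smul_dotProduct c x a⟩
  change {x ∈ C | f x = sInf (f '' C)} = segment ℝ v w at ha
  have hbdd : BddBelow (f '' C) := by
    have hcpt : IsCompact C := by
      rw [hC, hC', hC'']
      exact (s'.finite_toSet.isCompact_convexHull ℝ).add (s''.finite_toSet.isCompact_convexHull ℝ)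
    exact hcpt.bddBelow_image (LinearMap.continuous_of_finiteDimensional f).continuousOn
  have hmin {z} (hz : z ∈ segment ℝ v w) : IsMinOn f C z := by
    rw [← ha] at hz
    exact (eq_sInf_image_iff_isMinOn hbdd hz.1).1 hz.2
  obtain ⟨hφv, hψv, hdv⟩ := hφψ v hv
  obtain ⟨hφw, hψw, hdw⟩ := hφψ w hw
  have hmix : φ w + ψ v ∈ segment ℝ v w := by
    have hmem : φ w + ψ v ∈ C := hC ▸ Set.add_mem_add hφw hψv
    rw [← ha]
    refine ⟨hmem, (eq_sInf_image_iff_isMinOn hbdd hmem).2 ?_⟩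
    have hminv : IsMinOn f C (φ v + ψ v) := by rw [hdv]; exact hmin (left_mem_segment ℝ v w)
    have hminw : IsMinOn f C (φ w + ψ w) := by rw [hdw]; exact hmin (right_mem_segment ℝ v w)
    subst hC
    exact IsMinOn.add_swap hφv hψw hminv hminw
  exact exists_sub_eq_smul_of_add_mem_segment hdv hdw hmix

theorem stmt5 (n : ℕ) (s' s'' : Finset (Fin n → ℝ))
    (C' C'' C : Set (Fin n → ℝ))
    (hC' : C' = convexHull ℝ ↑s') (hC'' : C'' = convexHull ℝ ↑s'') (hC : C = C' + C'')
    (φ ψ : (Fin n → ℝ) → (Fin n → ℝ))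
    (hφψ : ∀ u ∈ Set.extremePoints ℝ C, φ u ∈ C' ∧ ψ u ∈ C'' ∧ φ u + ψ u = u)
    (v w : Fin n → ℝ) (hv : v ∈ Set.extremePoints ℝ C) (hw : w ∈ Set.extremePoints ℝ C)
    (hvw : v ≠ w)
    (hedge : ∃ a : Fin n → ℝ,
      {x ∈ C | (∑ t, x t * a t) = sInf ((fun x => ∑ t, x t * a t) '' C)} = segment ℝ v w) :
    ∃ lam : ℝ, lam ∈ Set.Icc (0 : ℝ) 1 ∧
      φ w - φ v = lam • (w - v) ∧ ψ w - ψ v = (1 - lam) • (w - v) :=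
  stmt5_general n s' s'' C' C'' C hC' hC'' hC φ ψ hφψ v w hv hw hedge
end

section
/- Let C be a triangle (2-dimensional polytope with three vertices) in ℝⁿ. Then every decomposition C = C' + C'' as a Minkowski sum of convex polytopes C', C'' is of the form C' = λC + β, C'' = (1 − λ)C − β for some λ ∈ [0,1] and β ∈ ℝⁿ. -/
/-!
Write `T = conv {u, v, w}` and choose `a_p ∈ C'`, `b_p ∈ C''` with `a_p + b_p = p` for each
vertex `p`. Since `x + b_p ∈ T` for every `x ∈ C'`, a linear functional extremal on `T` at `p`
is extremal on `C'` at `a_p`. In coordinates `s, t` dual to the edges `v - u, w - u`, each of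
`s`, `t`, `s + t` is extremal on `T` along a whole edge, so it takes the same value at the two
corresponding points `a_p`. Hence `a_v - a_u` and `a_w - a_u` are the same multiple `λ` of the
edges, and the same inequalities cut `C'` down to `a_u + λ (T - u)`, which it contains by
convexity. Likewise `C'' = b_u + μ (T - u)`, and `a_v + b_v = v` forces `λ + μ = 1`.
-/

open Pointwise

section AddSubset

variable {M N F : Type*} [AddCommMonoid M] [AddCommMonoid N] [PartialOrder N]
  [IsOrderedCancelAddMonoid N] [FunLike F M N] [AddHomClass F M N]
  {A B T : Set M} {f : F} {a b p : M}

theorem IsMinOn.of_add_subset (hAB : A + B ⊆ T) (hb : b ∈ B) (hab : a + b = p)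
    (hT : IsMinOn f T p) : IsMinOn f A a :=
  isMinOn_iff.2 fun x hx => by
    have := isMinOn_iff.1 (hab ▸ hT) _ (hAB (Set.add_mem_add hx hb))
    rw [map_add, map_add] at this
    exact le_of_add_le_add_right this

theorem IsMaxOn.of_add_subset (hAB : A + B ⊆ T) (hb : b ∈ B) (hab : a + b = p)
    (hT : IsMaxOn f T p) : IsMaxOn f A a :=
  isMaxOn_iff.2 fun x hx => by
    have := isMaxOn_iff.1 (hab ▸ hT) _ (hAB (Set.add_mem_add hx hb))
    rw [map_add, map_add] at this
    exact le_of_add_le_add_right this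

end AddSubset

theorem LinearIndependent.exists_linearMap_apply_eq {ι K V : Type*} [Field K] [AddCommGroup V]
    [Module K V] {e : ι → V} (he : LinearIndependent K e) (c : ι → K) :
    ∃ f : V →ₗ[K] K, ∀ i, f (e i) = c i := by
  obtain ⟨f, hf⟩ := LinearMap.exists_extend (Finsupp.linearCombination K c ∘ₗ he.repr)
  refine ⟨f, fun i => ?_⟩
  have hei : e i ∈ Submodule.span K (Set.range e) := Submodule.subset_span ⟨i, rfl⟩
  simpa [he.repr_eq_single i ⟨e i, hei⟩ rfl] using congr($hf ⟨e i, hei⟩)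

variable {V : Type*} [AddCommGroup V] [Module ℝ V] {u v w : V}

theorem linearIndependent_sub_of_not_collinear (h : ¬Collinear ℝ ({u, v, w} : Set V)) :
    LinearIndependent ℝ ![v - u, w - u] := by
  rw [← affineIndependent_iff_not_collinear_set,
    affineIndependent_iff_linearIndependent_vsub ℝ _ (0 : Fin 3),
    ← linearIndependent_equiv (finSuccAboveEquiv (0 : Fin 3))] at h
  convert h using 1
  · ext i
    fin_cases i <;> rfl
  · rfl

theorem mem_convexHull_triple {x : V} :
    x ∈ convexHull ℝ {u, v, w} ↔
      ∃ a b : ℝ, 0 ≤ a ∧ 0 ≤ b ∧ a + b ≤ 1 ∧ x = u + a • (v - u) + b • (w - u) := by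
  rw [convexHull_insert (Set.insert_nonempty _ _), convexHull_pair, convexJoin_singleton_left,
    Set.mem_iUnion₂]
  simp only [segment_eq_image', Set.mem_image, Set.mem_Icc]
  constructor
  · rintro ⟨_, ⟨φ, ⟨hφ₀, hφ₁⟩, rfl⟩, θ, ⟨hθ₀, hθ₁⟩, rfl⟩
    exact ⟨θ * (1 - φ), θ * φ, by nlinarith, by positivity, by nlinarith, by module⟩
  · rintro ⟨a, b, ha, hb, hab, rfl⟩
    have hb' : (a + b) * (b / (a + b)) = b := mul_div_cancel_of_imp' fun h => by linarith
    refine ⟨_, ⟨b / (a + b), ⟨by positivity, div_le_one_of_le₀ (by linarith) (by positivity)⟩,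
      rfl⟩, a + b, ⟨by positivity, hab⟩, ?_⟩
    linear_combination (norm := module) hb' • (w - v)

-- For `r = 0` this still works: then `a = b = 0`, and `a / 0 = 0` gives the vertex `u`.
theorem add_mem_image_convexHull_triple {r a b : ℝ} (ha : 0 ≤ a) (hb : 0 ≤ b) (hab : a + b ≤ r)
    (p : V) :
    p + a • (v - u) + b • (w - u) ∈ (fun y => r • y + (p - r • u)) '' convexHull ℝ {u, v, w} := by
  have hr : 0 ≤ r := by linarith
  have ha' : r * (a / r) = a := mul_div_cancel_of_imp' fun h => by linarith
  have hb' : r * (b / r) = b := mul_div_cancel_of_imp' fun h => by linarith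
  refine ⟨u + (a / r) • (v - u) + (b / r) • (w - u), mem_convexHull_triple.2 ⟨a / r, b / r,
    div_nonneg ha hr, div_nonneg hb hr, by rw [← add_div]; exact div_le_one_of_le₀ hab hr, rfl⟩, ?_⟩
  linear_combination (norm := module) ha' • (v - u) + hb' • (w - u)

structure TriangleCoords (u v w : V) where
  s : V →ₗ[ℝ] ℝ
  t : V →ₗ[ℝ] ℝ
  s_v : s (v - u) = 1
  s_w : s (w - u) = 0
  t_v : t (v - u) = 0
  t_w : t (w - u) = 1

namespace TriangleCoords

theorem nonempty_of_not_collinear (h : ¬Collinear ℝ ({u, v, w} : Set V)) :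
    Nonempty (TriangleCoords u v w) := by
  have hli := linearIndependent_sub_of_not_collinear h
  obtain ⟨s, hs⟩ := hli.exists_linearMap_apply_eq ![1, 0]
  obtain ⟨t, ht⟩ := hli.exists_linearMap_apply_eq ![0, 1]
  exact ⟨⟨s, t, hs 0, hs 1, ht 0, ht 1⟩⟩

variable (c : TriangleCoords u v w)

theorem mem_convexHull_iff {x : V} :
    x ∈ convexHull ℝ {u, v, w} ↔
      0 ≤ c.s (x - u) ∧ 0 ≤ c.t (x - u) ∧ c.s (x - u) + c.t (x - u) ≤ 1 ∧
        x = u + c.s (x - u) • (v - u) + c.t (x - u) • (w - u) := by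
  refine mem_convexHull_triple.trans ⟨?_, fun h => ⟨_, _, h⟩⟩
  rintro ⟨a, b, ha, hb, hab, rfl⟩
  have hs : c.s (u + a • (v - u) + b • (w - u) - u) = a := by simp [c.s_v, c.s_w]
  have ht : c.t (u + a • (v - u) + b • (w - u) - u) = b := by simp [c.t_v, c.t_w]
  rw [hs, ht]
  exact ⟨ha, hb, hab, rfl⟩

theorem isMinOn_s (p : V) (hp : p = u ∨ p = w) : IsMinOn c.s (convexHull ℝ {u, v, w}) p :=
  isMinOn_iff.2 fun x hx => by
    have := (c.mem_convexHull_iff.1 hx).1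
    have := c.s_w
    simp only [map_sub] at *
    rcases hp with rfl | rfl <;> linarith

theorem isMinOn_t (p : V) (hp : p = u ∨ p = v) : IsMinOn c.t (convexHull ℝ {u, v, w}) p :=
  isMinOn_iff.2 fun x hx => by
    have := (c.mem_convexHull_iff.1 hx).2.1
    have := c.t_v
    simp only [map_sub] at *
    rcases hp with rfl | rfl <;> linarith

theorem isMaxOn_s_add_t (p : V) (hp : p = v ∨ p = w) :
    IsMaxOn (c.s + c.t) (convexHull ℝ {u, v, w}) p :=
  isMaxOn_iff.2 fun x hx => by
    have := (c.mem_convexHull_iff.1 hx).2.2.1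
    have := c.s_v; have := c.s_w; have := c.t_v; have := c.t_w
    simp only [map_sub, LinearMap.add_apply] at *
    rcases hp with rfl | rfl <;> linarith

end TriangleCoords

theorem Convex.exists_eq_image_of_add_subset_convexHull_triple {A B : Set V} (hA : Convex ℝ A)
    (huvw : ¬Collinear ℝ ({u, v, w} : Set V)) (hAB : A + B ⊆ convexHull ℝ {u, v, w})
    {au av aw bu bv bw : V}
    (hau : au ∈ A) (hav : av ∈ A) (haw : aw ∈ A) (hbu : bu ∈ B) (hbv : bv ∈ B) (hbw : bw ∈ B)
    (hu : au + bu = u) (hv : av + bv = v) (hw : aw + bw = w) :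
    ∃ r : ℝ, 0 ≤ r ∧ av = au + r • (v - u) ∧
      A = (fun x => r • x + (au - r • u)) '' convexHull ℝ {u, v, w} := by
  obtain ⟨c⟩ := TriangleCoords.nonempty_of_not_collinear huvw
  have hs_u := isMinOn_iff.1 <| (c.isMinOn_s u (.inl rfl)).of_add_subset hAB hbu hu
  have hs_w := isMinOn_iff.1 <| (c.isMinOn_s w (.inr rfl)).of_add_subset hAB hbw hw
  have ht_u := isMinOn_iff.1 <| (c.isMinOn_t u (.inl rfl)).of_add_subset hAB hbu hu
  have ht_v := isMinOn_iff.1 <| (c.isMinOn_t v (.inr rfl)).of_add_subset hAB hbv hv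
  have hst_v := isMaxOn_iff.1 <| (c.isMaxOn_s_add_t v (.inl rfl)).of_add_subset hAB hbv hv
  have hst_w := isMaxOn_iff.1 <| (c.isMaxOn_s_add_t w (.inr rfl)).of_add_subset hAB hbw hw
  simp only [LinearMap.add_apply] at hst_v hst_w
  have hplane : ∀ x ∈ A, x = au + c.s (x - au) • (v - u) + c.t (x - au) • (w - u) := by
    intro x hx
    have h := (c.mem_convexHull_iff.1 (hAB (Set.add_mem_add hx hbu))).2.2.2
    rw [show x + bu - u = x - au by rw [← hu]; abel] at h
    linear_combination (norm := module) h - hu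
  have hs_eq : c.s aw = c.s au := le_antisymm (hs_w au hau) (hs_u aw haw)
  have ht_eq : c.t av = c.t au := le_antisymm (ht_v au hau) (ht_u av hav)
  have hst_eq : c.s av + c.t av = c.s aw + c.t aw := le_antisymm (hst_w av hav) (hst_v aw haw)
  set r := c.s (av - au)
  have hav' : av = au + r • (v - u) := by
    have h := hplane av hav
    rwa [map_sub c.t, ht_eq, sub_self, zero_smul, add_zero] at h
  have haw' : aw = au + r • (w - u) := by
    have h := hplane aw haw
    rwa [map_sub c.s, hs_eq, sub_self, zero_smul, add_zero,
      show c.t (aw - au) = r by simp only [r, map_sub]; linarith] at h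
  refine ⟨r, by simp only [r, map_sub]; linarith [hs_u av hav], hav',
    Set.Subset.antisymm (fun x hx => ?_) ?_⟩
  · have := hs_u x hx; have := ht_u x hx; have := hst_v x hx
    rw [hplane x hx]
    exact add_mem_image_convexHull_triple (by simp only [map_sub]; linarith)
      (by simp only [map_sub]; linarith) (by simp only [r, map_sub]; linarith) au
  · rintro _ ⟨y, hy, rfl⟩
    obtain ⟨a, b, ha, hb, hab, rfl⟩ := mem_convexHull_triple.1 hy
    have e : r • (u + a • (v - u) + b • (w - u)) + (au - r • u) =
        au + a • (av - au) + b • (aw - au) := by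
      rw [hav', haw']
      module
    simp only [e]
    exact hA.convexHull_subset_iff.2 (by simp [Set.insert_subset_iff, hau, hav, haw])
      (mem_convexHull_triple.2 ⟨a, b, ha, hb, hab, rfl⟩)

theorem stmt6 (n : ℕ) (u v w : Fin n → ℝ)
    (huvw : ¬ Collinear ℝ ({u, v, w} : Set (Fin n → ℝ)))
    (C : Set (Fin n → ℝ)) (hC : C = convexHull ℝ ({u, v, w} : Set (Fin n → ℝ)))
    (s' s'' : Finset (Fin n → ℝ)) (C' C'' : Set (Fin n → ℝ))
    (hC' : C' = convexHull ℝ ↑s') (hC'' : C'' = convexHull ℝ ↑s'')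
    (hsum : C = C' + C'') :
    ∃ lam : ℝ, lam ∈ Set.Icc (0 : ℝ) 1 ∧ ∃ β : Fin n → ℝ,
      C' = (fun x => lam • x + β) '' C ∧ C'' = (fun x => (1 - lam) • x - β) '' C := by
  have hT : C' + C'' = convexHull ℝ {u, v, w} := hsum.symm.trans hC
  have hvert : ∀ p ∈ ({u, v, w} : Set (Fin n → ℝ)), p ∈ C' + C'' :=
    fun p hp => hT ▸ subset_convexHull ℝ _ hp
  obtain ⟨au, hau, bu, hbu, hu⟩ := hvert u (by simp)
  obtain ⟨av, hav, bv, hbv, hv⟩ := hvert v (by simp)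
  obtain ⟨aw, haw, bw, hbw, hw⟩ := hvert w (by simp)
  have hC'conv : Convex ℝ C' := hC' ▸ convex_convexHull ℝ _
  have hC''conv : Convex ℝ C'' := hC'' ▸ convex_convexHull ℝ _
  obtain ⟨r, hr, hav', hA⟩ := hC'conv.exists_eq_image_of_add_subset_convexHull_triple huvw
    hT.subset hau hav haw hbu hbv hbw hu hv hw
  obtain ⟨r', hr', hbv', hB⟩ := hC''conv.exists_eq_image_of_add_subset_convexHull_triple huvw
    (add_comm C' C'' ▸ hT.subset) hbu hbv hbw hau hav haw
    (add_comm au bu ▸ hu) (add_comm av bv ▸ hv) (add_comm aw bw ▸ hw)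
  have hvu : v - u ≠ 0 := sub_ne_zero.2 fun h => huvw (by simp [h, collinear_pair])
  have hrr' : (r + r' - 1) • (v - u) = 0 := by
    linear_combination (norm := module) hv - hu - hav' - hbv'
  obtain rfl : r' = 1 - r := by linarith [(smul_eq_zero.1 hrr').resolve_right hvu]
  refine ⟨r, ⟨hr, by linarith⟩, au - r • u, hC ▸ hA, ?_⟩
  rw [hC, hB]
  congr 1
  funext x
  linear_combination (norm := module) hu
end

section
/- (Ostrowski) Let K be a field and P, Q ∈ K[X₁,…,Xₙ] nonzero. Then the Newton polytope of PQ equals the Minkowski sum of the Newton polytopes of P and Q: C(PQ) = C(P) + C(Q). -/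
/-! Every monomial of `P * Q` is a product of monomials of `P` and `Q`, which gives
`C(PQ) ⊆ C(P) + C(Q)`. Conversely, `C(P) + C(Q)` is a polytope, hence the convex hull of its
vertices, and a vertex of a Minkowski sum splits in exactly one way as `a + b` with `a ∈ C(P)`,
`b ∈ C(Q)`; moreover `a` and `b` are vertices, so exponents of `P` and `Q`. The exponent `a + b`
therefore arises only once in the expansion of `P * Q`, and its coefficient is the product of two
nonzero coefficients. -/

open Pointwise

section MinkowskiSum

variable {𝕜 E : Type*} [AddCommGroup E] {A B : Set E} {a a' b b' : E}

theorem eq_and_eq_of_add_eq_of_mem_extremePoints_add [Field 𝕜] [LinearOrder 𝕜]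
    [IsStrictOrderedRing 𝕜] [Module 𝕜 E] (ha : a ∈ A) (hb : b ∈ B) (ha' : a' ∈ A) (hb' : b' ∈ B)
    (hv : a + b ∈ (A + B).extremePoints 𝕜) (h : a' + b' = a + b) : a' = a ∧ b' = b := by
  have hmid : a + b ∈ openSegment 𝕜 (a + b') (a' + b) :=
    ⟨1 / 2, 1 / 2, by norm_num, by norm_num, by norm_num,
      by linear_combination (norm := module) (1 / 2 : 𝕜) • h⟩
  obtain ⟨hb'b, ha'a⟩ :=
    (mem_extremePoints.1 hv).2 _ (Set.add_mem_add ha hb') _ (Set.add_mem_add ha' hb) hmid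
  exact ⟨add_right_cancel ha'a, add_left_cancel hb'b⟩

theorem left_mem_extremePoints_of_add_mem_extremePoints_add [Ring 𝕜] [PartialOrder 𝕜]
    [Module 𝕜 E] (ha : a ∈ A) (hb : b ∈ B) (hv : a + b ∈ (A + B).extremePoints 𝕜) :
    a ∈ A.extremePoints 𝕜 := by
  refine ⟨ha, fun x₁ hx₁ x₂ hx₂ hseg => add_right_cancel (hv.2 (Set.add_mem_add hx₁ hb)
    (Set.add_mem_add hx₂ hb) ?_)⟩
  obtain ⟨s, t, hs, ht, hst, rfl⟩ := hseg
  refine ⟨s, t, hs, ht, hst, ?_⟩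
  rw [smul_add, smul_add, add_add_add_comm, ← add_smul, hst, one_smul]

theorem right_mem_extremePoints_of_add_mem_extremePoints_add [Ring 𝕜] [PartialOrder 𝕜]
    [Module 𝕜 E] (ha : a ∈ A) (hb : b ∈ B) (hv : a + b ∈ (A + B).extremePoints 𝕜) :
    b ∈ B.extremePoints 𝕜 :=
  left_mem_extremePoints_of_add_mem_extremePoints_add hb ha (by rwa [add_comm b, add_comm B])

end MinkowskiSum

theorem Set.Finite.convexHull_extremePoints_convexHull {E : Type*} [NormedAddCommGroup E]
    [NormedSpace ℝ E] {s : Set E} (hs : s.Finite) :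
    convexHull ℝ ((convexHull ℝ s).extremePoints ℝ) = convexHull ℝ s := by
  have hclosed : IsClosed (convexHull ℝ ((convexHull ℝ s).extremePoints ℝ)) :=
    ((hs.subset extremePoints_convexHull_subset).isCompact_convexHull ℝ).isClosed
  rw [← hclosed.closure_eq]
  exact closure_convexHull_extremePoints (hs.isCompact_convexHull ℝ) (convex_convexHull ℝ s)

namespace MvPolynomial

variable {R σ E : Type*} [CommSemiring R] [NoZeroDivisors R]

theorem extremePoints_convexHull_add_subset_image_support_mul {𝕜 : Type*} [Field 𝕜]
    [LinearOrder 𝕜] [IsStrictOrderedRing 𝕜] [AddCommGroup E] [Module 𝕜 E]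
    (φ : (σ →₀ ℕ) →+ E) (hφ : Function.Injective φ) (P Q : MvPolynomial σ R) :
    (convexHull 𝕜 (φ '' P.support) + convexHull 𝕜 (φ '' Q.support)).extremePoints 𝕜 ⊆
      φ '' (P * Q).support := by
  intro v hv
  obtain ⟨a, ha, b, hb, rfl⟩ := Set.mem_add.1 (extremePoints_subset hv)
  obtain ⟨a₀, ha₀, rfl⟩ := extremePoints_convexHull_subset
    (left_mem_extremePoints_of_add_mem_extremePoints_add ha hb hv)
  obtain ⟨b₀, hb₀, rfl⟩ := extremePoints_convexHull_subset
    (right_mem_extremePoints_of_add_mem_extremePoints_add ha hb hv)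
  have hunique : UniqueAdd P.support Q.support a₀ b₀ := fun x y hx hy hxy => by
    have := eq_and_eq_of_add_eq_of_mem_extremePoints_add ha hb
      (subset_convexHull 𝕜 _ ⟨x, hx, rfl⟩) (subset_convexHull 𝕜 _ ⟨y, hy, rfl⟩) hv
      (by rw [← map_add, hxy, map_add])
    exact ⟨hφ this.1, hφ this.2⟩
  have hcoeff : (P * Q).coeff (a₀ + b₀) = P.coeff a₀ * Q.coeff b₀ :=
    AddMonoidAlgebra.coeff_mul_add_of_uniqueAdd hunique
  refine ⟨a₀ + b₀, ?_, map_add φ a₀ b₀⟩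
  rw [Finset.mem_coe, mem_support_iff, hcoeff]
  exact mul_ne_zero (mem_support_iff.1 ha₀) (mem_support_iff.1 hb₀)

theorem convexHull_image_support_mul [NormedAddCommGroup E] [NormedSpace ℝ E]
    (φ : (σ →₀ ℕ) →+ E) (hφ : Function.Injective φ) (P Q : MvPolynomial σ R) :
    convexHull ℝ (φ '' (P * Q).support) =
      convexHull ℝ (φ '' P.support) + convexHull ℝ (φ '' Q.support) := by
  classical
  have hsum_finite : (φ '' P.support + φ '' Q.support).Finite :=
    (P.support.finite_toSet.image φ).add (Q.support.finite_toSet.image φ)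
  rw [← convexHull_add]
  refine (convexHull_mono ?_).antisymm ?_
  · rw [← Set.image_add, ← Finset.coe_add]
    exact Set.image_mono (support_mul P Q)
  · rw [← hsum_finite.convexHull_extremePoints_convexHull, convexHull_add]
    exact convexHull_mono (extremePoints_convexHull_add_subset_image_support_mul φ hφ P Q)

end MvPolynomial

theorem stmt7_general {K : Type*} [Field K] (n : ℕ) (P Q : MvPolynomial (Fin n) K) :
    convexHull ℝ ((fun d : Fin n →₀ ℕ => fun t => (d t : ℝ)) '' ↑(P * Q).support)
      = convexHull ℝ ((fun d : Fin n →₀ ℕ => fun t => (d t : ℝ)) '' ↑P.support)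
        + convexHull ℝ ((fun d : Fin n →₀ ℕ => fun t => (d t : ℝ)) '' ↑Q.support) := by
  let φ : (Fin n →₀ ℕ) →+ (Fin n → ℝ) :=
    { toFun := fun d t => d t
      map_zero' := by ext; simp
      map_add' := fun _ _ => by ext; simp }
  exact MvPolynomial.convexHull_image_support_mul φ
    (fun d e h => Finsupp.ext fun t => Nat.cast_injective (congrFun h t)) P Q

theorem stmt7 {K : Type*} [Field K] (n : ℕ) (P Q : MvPolynomial (Fin n) K)
    (hP : P ≠ 0) (hQ : Q ≠ 0) :
    convexHull ℝ ((fun d : Fin n →₀ ℕ => fun t => (d t : ℝ)) '' ↑(P * Q).support)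
      = convexHull ℝ ((fun d : Fin n →₀ ℕ => fun t => (d t : ℝ)) '' ↑P.support)
        + convexHull ℝ ((fun d : Fin n →₀ ℕ => fun t => (d t : ℝ)) '' ↑Q.support) :=
  stmt7_general n P Q
end

section
/- Let P, Q be nonzero multivariate polynomials over a field, and let v be a vertex (extreme point) of the convex hull of I(P) + I(Q). Then v ∈ I(PQ); in fact, if v = i + j is the unique decomposition with i ∈ conv(I(P)), j ∈ conv(I(Q)), then the coefficient of X^v in PQ equals the product of the coefficients of X^i in P and X^j in Q, which is nonzero. -/
/-!
If `v` is a vertex of `conv (I(P) + I(Q))` and `v = i + j = i' + j'` are two decompositions with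
`i, i' ∈ I(P)` and `j, j' ∈ I(Q)`, then `v` is the midpoint of `i' + j` and `i + j'`, both of which
lie in `I(P) + I(Q)`; extremality forces `i' = i` and `j' = j`. So the coefficient of `X^v` in `PQ`
is a sum with the single term `P_i Q_j`, which is nonzero.
-/

open Pointwise

def Finsupp.natCastFun (σ : Type*) : (σ →₀ ℕ) →+ (σ → ℝ) where
  toFun d t := d t
  map_zero' := by ext; simp
  map_add' _ _ := by ext; simp

theorem Finsupp.natCastFun_injective (σ : Type*) : Function.Injective (natCastFun σ) :=
  fun _ _ h ↦ Finsupp.ext fun t ↦ Nat.cast_injective (congrFun h t)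

theorem mem_openSegment_of_add_eq_add {𝕜 E : Type*} [Field 𝕜] [LinearOrder 𝕜]
    [IsStrictOrderedRing 𝕜] [AddCommGroup E] [Module 𝕜 E] {x y z : E} (h : y + z = x + x) :
    x ∈ openSegment 𝕜 y z :=
  ⟨1 / 2, 1 / 2, by norm_num, by norm_num, by norm_num, by
    rw [← smul_add, h, ← two_smul 𝕜 x, smul_smul]; norm_num⟩

theorem UniqueAdd.of_map_add_mem_extremePoints {𝕜 E G : Type*} [Field 𝕜] [LinearOrder 𝕜]
    [IsStrictOrderedRing 𝕜] [AddCommGroup E] [Module 𝕜 E]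
    [AddCommMonoid G] [IsCancelAdd G] [DecidableEq G]
    {f : G →+ E} (hf : Function.Injective f) {A B : Finset G} {a b : G} (ha : a ∈ A) (hb : b ∈ B)
    (hext : f (a + b) ∈ Set.extremePoints 𝕜 (convexHull 𝕜 (f '' ↑(A + B)))) :
    UniqueAdd A B a b := by
  intro a' b' ha' hb' hsum
  have hmem {c d : G} (hc : c ∈ A) (hd : d ∈ B) : f (c + d) ∈ convexHull 𝕜 (f '' ↑(A + B)) :=
    subset_convexHull 𝕜 _ ⟨c + d, Finset.add_mem_add hc hd, rfl⟩
  have hmid : f (a + b) ∈ openSegment 𝕜 (f (a' + b)) (f (a + b')) :=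
    mem_openSegment_of_add_eq_add <| by
      rw [← map_add, ← map_add, add_add_add_comm, add_comm b, ← add_add_add_comm, hsum]
  have ha'_eq : a' = a := add_right_cancel (hf (hext.2 (hmem ha' hb) (hmem ha hb') hmid))
  exact ⟨ha'_eq, add_left_cancel (hsum.trans (congrArg (· + b) ha'_eq.symm))⟩

theorem stmt9_general {K : Type*} [Field K] (n : ℕ) (P Q : MvPolynomial (Fin n) K)
    (v : Fin n →₀ ℕ)
    (hv : (fun t => (v t : ℝ)) ∈ Set.extremePoints ℝ
      (convexHull ℝ ((fun d : Fin n →₀ ℕ => fun t => (d t : ℝ)) '' ↑(P.support + Q.support)))) :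
    v ∈ (P * Q).support ∧
    ∃ i ∈ P.support, ∃ j ∈ Q.support, i + j = v ∧
      (P * Q).coeff v = P.coeff i * Q.coeff j ∧ P.coeff i * Q.coeff j ≠ 0 := by
  change Finsupp.natCastFun (Fin n) v ∈ Set.extremePoints ℝ
    (convexHull ℝ (Finsupp.natCastFun (Fin n) '' ↑(P.support + Q.support))) at hv
  have hinj := Finsupp.natCastFun_injective (Fin n)
  obtain ⟨i, hi, j, hj, rfl⟩ :=
    Finset.mem_add.1 (hinj.mem_set_image.1 (extremePoints_convexHull_subset hv))
  have huniq : UniqueAdd P.support Q.support i j := .of_map_add_mem_extremePoints hinj hi hj hv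
  have hcoeff : (P * Q).coeff (i + j) = P.coeff i * Q.coeff j :=
    AddMonoidAlgebra.coeff_mul_add_of_uniqueAdd huniq
  have hne : P.coeff i * Q.coeff j ≠ 0 :=
    mul_ne_zero (MvPolynomial.mem_support_iff.1 hi) (MvPolynomial.mem_support_iff.1 hj)
  exact ⟨MvPolynomial.mem_support_iff.2 (hcoeff ▸ hne), i, hi, j, hj, rfl, hcoeff, hne⟩

theorem stmt9 {K : Type*} [Field K] (n : ℕ) (P Q : MvPolynomial (Fin n) K)
    (hP : P ≠ 0) (hQ : Q ≠ 0) (v : Fin n →₀ ℕ)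
    (hv : (fun t => (v t : ℝ)) ∈ Set.extremePoints ℝ
      (convexHull ℝ ((fun d : Fin n →₀ ℕ => fun t => (d t : ℝ)) '' ↑(P.support + Q.support)))) :
    v ∈ (P * Q).support ∧
    ∃ i ∈ P.support, ∃ j ∈ Q.support, i + j = v ∧
      (P * Q).coeff v = P.coeff i * Q.coeff j ∧ P.coeff i * Q.coeff j ≠ 0 :=
  stmt9_general n P Q v hv
end

section
/- Let K be an algebraically closed field, I', I'' ⊆ ℕⁿ finite nonempty sets, and I ⊆ I' + I''. Then the set of products {QR : Q, R ∈ K[X], I(Q) ⊆ I', I(R) ⊆ I'', Q ≠ 0, R ≠ 0} is Zariski-closed in the space W_I'+I'' := {P ≠ 0 : I(P) ⊆ I' + I''} ≅ 𝔸^{|I'+I''|} \ {0}. -/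
/-!
Give `Q` and `R` unknown coefficient vectors `x` on `I'` and `y` on `I''`. Since `c ≠ 0`, the
product `QR` is a nonzero multiple of `P_c = ∑ c_k X^k` exactly when all the `2 × 2` minors
`c_j [QR]_i - c_i [QR]_j` vanish, and rescaling `Q` absorbs the multiple. These minors are forms of
bidegree `(1, 1)` in `(x, y)` whose coefficients are linear in `c`. So the set of products is the
image in `c`-space of the common zeros of a family of bihomogeneous forms on `ℙ × ℙ`, and such an
image is closed by elimination theory. By the Nullstellensatz, there is no common zero with
`x ≠ 0 ≠ y` iff every `x_a y_b` lies in the radical of the ideal `J` of the forms. By pigeonhole,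
this happens iff `J` contains all monomials of some bidegree `(N + 1, N + 1)`, iff the Macaulay
matrix of the shifts `m f_p` with `m` of bidegree `(N, N)` has full row rank, iff one of its
maximal minors, which are polynomials in `c`, is nonzero.
-/

open MvPolynomial

namespace Matrix

variable {K m n : Type*} [Field K] [Fintype m] [DecidableEq m]

theorem det_submatrix_eq_zero_of_vecMul_eq_zero (M : Matrix m n K) {v : m → K} (hv : v ≠ 0)
    (hvM : vecMul v M = 0) (e : m ↪ n) : (M.submatrix id e).det = 0 :=
  exists_vecMul_eq_zero_iff.1 ⟨v, hv, by
    ext j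
    simpa [vecMul, dotProduct] using congrFun hvM (e j)⟩

theorem exists_det_submatrix_ne_zero_of_span_col_eq_top (M : Matrix m n K)
    (hM : Submodule.span K (Set.range M.col) = ⊤) : ∃ e : m ↪ n, (M.submatrix id e).det ≠ 0 := by
  obtain ⟨κ, a, ha, hspan, hli⟩ := exists_linearIndependent' K M.col
  rw [hM] at hspan
  have : Finite κ := hli.finite
  let b : Module.Basis κ K (m → K) := .mk hli hspan.ge
  obtain ⟨e⟩ : Nonempty (m ≃ κ) := by
    rw [← Finite.card_eq, ← Module.finrank_eq_nat_card_basis b, Module.finrank_pi,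
      Nat.card_eq_fintype_card]
  refine ⟨e.toEmbedding.trans ⟨a, ha⟩, ?_⟩
  rw [← isUnit_iff_ne_zero, ← isUnit_iff_isUnit_det, ← linearIndependent_cols_iff_isUnit]
  exact hli.comp e e.injective

end Matrix

theorem exists_eq_smul_of_mul_eq_mul {ι K : Type*} [Field K] {c u : ι → K} (hc : c ≠ 0)
    (h : ∀ i j, c j * u i = c i * u j) : ∃ l : K, u = l • c := by
  obtain ⟨k, hk⟩ := Function.ne_iff.1 hc
  refine ⟨u k / c k, funext fun i => ?_⟩
  rw [Pi.smul_apply, smul_eq_mul, div_mul_eq_mul_div, eq_div_iff hk]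
  linear_combination h i k

namespace MvPolynomial

theorem IsWeightedHomogeneous.map {R S σ M : Type*} [CommSemiring R] [CommSemiring S]
    [AddCommMonoid M] {w : σ → M} {φ : MvPolynomial σ R} {m : M}
    (hφ : IsWeightedHomogeneous w φ m) (g : R →+* S) : IsWeightedHomogeneous w (map g φ) m :=
  fun _ hd => hφ fun h => hd (by rw [coeff_map, h, map_zero])

section WeightedHomogeneous

variable {R σ M : Type*} [CommSemiring R] [AddCancelCommMonoid M] {w : σ → M}

attribute [local instance] weightedGradedAlgebra in
theorem weightedHomogeneousComponent_add_mul {f : MvPolynomial σ R} {j : M}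
    (hf : IsWeightedHomogeneous w f j) (i : M) (g : MvPolynomial σ R) :
    weightedHomogeneousComponent w (i + j) (g * f) = weightedHomogeneousComponent w i g * f := by
  classical
  simp_rw [← weightedDecomposition.decompose'_apply]
  exact DirectSum.coe_decompose_mul_add_of_right_mem _ hf

theorem weightedHomogeneousComponent_mem_span_monomial_mul {ι : Type*}
    {f : ι → MvPolynomial σ R} {j : M} (hf : ∀ p, IsWeightedHomogeneous w (f p) j) (i : M)
    {φ : MvPolynomial σ R} (hφ : φ ∈ Ideal.span (Set.range f)) :
    weightedHomogeneousComponent w (i + j) φ ∈ Submodule.span R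
      (Set.image2 (fun s p => monomial s 1 * f p) {s | Finsupp.weight w s = i} .univ) := by
  obtain ⟨c, rfl⟩ := Finsupp.mem_span_range_iff_exists_finsupp.1 hφ
  rw [Finsupp.sum, map_sum]
  refine Submodule.sum_mem _ fun p _ => ?_
  rw [smul_eq_mul, weightedHomogeneousComponent_add_mul (hf p)]
  have hcomp := weightedHomogeneousComponent_mem w (c p) i
  rw [weightedHomogeneousSubmodule_eq_finsupp_supported,
    AddMonoidAlgebra.supported_eq_span_single] at hcomp
  have := Submodule.mem_map_of_mem (f := LinearMap.mulRight R (f p)) hcomp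
  rw [Submodule.map_span] at this
  refine Submodule.span_mono ?_ this
  rintro _ ⟨_, ⟨s, hs, rfl⟩, rfl⟩
  exact ⟨s, hs, p, trivial, rfl⟩

end WeightedHomogeneous

theorem eval_eq_sum_of_support_subset {σ R : Type*} [CommSemiring R] {φ : MvPolynomial σ R}
    {T : Finset (σ →₀ ℕ)} (hT : φ.support ⊆ T) (z : σ → R) :
    eval z φ = ∑ t ∈ T, coeff t φ * eval z (monomial t 1) := by
  rw [eval_eq, Finset.sum_subset hT fun t _ ht => by rw [notMem_support_iff.1 ht, zero_mul]]
  simp [eval_monomial, Finsupp.prod]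

section Elimination

variable {A B : Type*}

def bidegree : A ⊕ B → ℕ × ℕ := Sum.elim (fun _ => (1, 0)) (fun _ => (0, 1))

variable [Fintype A] [Fintype B]

theorem weight_bidegree (t : A ⊕ B →₀ ℕ) :
    Finsupp.weight bidegree t = (∑ a, t (.inl a), ∑ b, t (.inr b)) := by
  simp [Finsupp.weight_apply, Finsupp.sum_fintype, bidegree, Prod.ext_iff, Prod.fst_sum,
    Prod.snd_sum]

variable {R P : Type*} [CommSemiring R]

variable (A B) in
open scoped Classical in
noncomputable def bihomogeneousMonomials (N : ℕ) : Finset (A ⊕ B →₀ ℕ) :=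
  (Finset.Icc 0 (Finsupp.equivFunOnFinite.symm fun _ => N)).filter
    (Finsupp.weight bidegree · = (N, N))

theorem mem_bihomogeneousMonomials {N : ℕ} {t : A ⊕ B →₀ ℕ} :
    t ∈ bihomogeneousMonomials A B N ↔ Finsupp.weight bidegree t = (N, N) := by
  classical
  rw [bihomogeneousMonomials, Finset.mem_filter, Finset.mem_Icc, and_iff_right_iff_imp,
    weight_bidegree, Prod.mk.injEq]
  rintro ⟨hA, hB⟩
  refine ⟨zero_le, Finsupp.le_def.2 fun i => ?_⟩
  rcases i with a | b
  · simpa [← hA] using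
      Finset.single_le_sum (fun a _ => Nat.zero_le (t (.inl a))) (Finset.mem_univ a)
  · simpa [← hB] using
      Finset.single_le_sum (fun b _ => Nat.zero_le (t (.inr b))) (Finset.mem_univ b)

theorem support_subset_bihomogeneousMonomials {φ : MvPolynomial (A ⊕ B) R} {N : ℕ}
    (hφ : IsWeightedHomogeneous bidegree φ (N, N)) :
    φ.support ⊆ bihomogeneousMonomials A B N :=
  fun _ ht => mem_bihomogeneousMonomials.2 (hφ (mem_support_iff.1 ht))

noncomputable def macaulayMatrix (f : P → MvPolynomial (A ⊕ B) R) (N : ℕ) :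
    Matrix (bihomogeneousMonomials A B (N + 1)) (bihomogeneousMonomials A B N × P) R :=
  .of fun t sp => coeff t (monomial sp.1 1 * f sp.2)

theorem macaulayMatrix_map {S : Type*} [CommSemiring S] (f : P → MvPolynomial (A ⊕ B) R)
    (N : ℕ) (g : R →+* S) :
    (macaulayMatrix f N).map g = macaulayMatrix (fun p => map g (f p)) N := by
  ext t sp
  rw [Matrix.map_apply, macaulayMatrix, macaulayMatrix, Matrix.of_apply, Matrix.of_apply,
    ← coeff_map, map_mul, map_monomial, map_one]

noncomputable def macaulayMinors {S : Type*} [CommRing S] (f : P → MvPolynomial (A ⊕ B) S) :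
    Set S :=
  {g | ∃ (N : ℕ) (e : bihomogeneousMonomials A B (N + 1) ↪ bihomogeneousMonomials A B N × P),
    g = ((macaulayMatrix f N).submatrix id e).det}

variable {K : Type*} [Field K] {f : P → MvPolynomial (A ⊕ B) K}

theorem exists_eval_monomial_ne_zero {x : A → K} {y : B → K} (hx : x ≠ 0)
    (hy : y ≠ 0) (N : ℕ) :
    ∃ t ∈ bihomogeneousMonomials A B N, eval (Sum.elim x y) (monomial t 1) ≠ 0 := by
  obtain ⟨a, ha⟩ : ∃ a, x a ≠ 0 := Function.ne_iff.1 hx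
  obtain ⟨b, hb⟩ : ∃ b, y b ≠ 0 := Function.ne_iff.1 hy
  refine ⟨.single (.inl a) N + .single (.inr b) N, ?_, ?_⟩
  · simp [mem_bihomogeneousMonomials, Finsupp.weight_single, bidegree]
  · have hmon : monomial (.single (.inl a) N + .single (.inr b) N : A ⊕ B →₀ ℕ) (1 : K) =
        X (.inl a) ^ N * X (.inr b) ^ N := by
      rw [X_pow_eq_monomial, X_pow_eq_monomial, monomial_mul, one_mul]
    simpa [hmon] using mul_ne_zero (pow_ne_zero N ha) (pow_ne_zero N hb)

theorem vecMul_macaulayMatrix (hf : ∀ p, IsWeightedHomogeneous bidegree (f p) (1, 1)) (N : ℕ)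
    (z : A ⊕ B → K) :
    Matrix.vecMul (fun t => eval z (monomial t.1 1)) (macaulayMatrix f N) =
      fun sp => eval z (monomial sp.1.1 1 * f sp.2) := by
  ext ⟨s, p⟩
  have hsp : IsWeightedHomogeneous bidegree (monomial s.1 (1 : K) * f p) (N + 1, N + 1) :=
    (isWeightedHomogeneous_monomial _ _ _ (mem_bihomogeneousMonomials.1 s.2)).mul (hf p)
  rw [eval_eq_sum_of_support_subset (support_subset_bihomogeneousMonomials hsp),
    ← Finset.sum_attach]
  exact Finset.sum_congr rfl fun t _ => mul_comm _ _

theorem det_macaulayMatrix_submatrix_eq_zero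
    (hf : ∀ p, IsWeightedHomogeneous bidegree (f p) (1, 1)) {x : A → K} {y : B → K}
    (hx : x ≠ 0) (hy : y ≠ 0) (hxy : ∀ p, eval (Sum.elim x y) (f p) = 0) (N : ℕ)
    (e : bihomogeneousMonomials A B (N + 1) ↪ bihomogeneousMonomials A B N × P) :
    ((macaulayMatrix f N).submatrix id e).det = 0 := by
  let v : bihomogeneousMonomials A B (N + 1) → K := fun t => eval (Sum.elim x y) (monomial t.1 1)
  obtain ⟨t, ht, hne⟩ := exists_eval_monomial_ne_zero hx hy (N + 1)
  have hvM : Matrix.vecMul v (macaulayMatrix f N) = 0 := by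
    rw [vecMul_macaulayMatrix hf]
    ext sp
    rw [map_mul, hxy, mul_zero, Pi.zero_apply]
  exact Matrix.det_submatrix_eq_zero_of_vecMul_eq_zero _ (Function.ne_iff.2 ⟨⟨t, ht⟩, hne⟩) hvM e

theorem X_mul_X_mem_radical_span [IsAlgClosed K]
    (hno : ∀ (x : A → K) (y : B → K), x ≠ 0 → y ≠ 0 → ∃ p, eval (Sum.elim x y) (f p) ≠ 0)
    (a : A) (b : B) : X (.inl a) * X (.inr b) ∈ (Ideal.span (Set.range f)).radical := by
  rw [← vanishingIdeal_zeroLocus_eq_radical (K := K), mem_vanishingIdeal_iff]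
  intro z hz
  have hzero : ∀ p, eval z (f p) = 0 := fun p => hz (f p) (Ideal.subset_span ⟨p, rfl⟩)
  rw [← Sum.elim_comp_inl_inr z] at hzero
  rw [map_mul, aeval_X, aeval_X, mul_eq_zero]
  by_contra! h
  obtain ⟨p, hp⟩ :=
    hno (z ∘ .inl) (z ∘ .inr) (Function.ne_iff.2 ⟨a, h.1⟩) (Function.ne_iff.2 ⟨b, h.2⟩)
  exact hp (hzero p)

theorem monomial_mem_of_X_mul_X_pow_mem {J : Ideal (MvPolynomial (A ⊕ B) R)} {n : ℕ}
    (hJ : ∀ a b, (X (.inl a) * X (.inr b)) ^ n ∈ J) {t : A ⊕ B →₀ ℕ}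
    (hA : Fintype.card A * n < ∑ a, t (.inl a)) (hB : Fintype.card B * n < ∑ b, t (.inr b)) :
    monomial t 1 ∈ J := by
  obtain ⟨a, -, ha⟩ := Finset.exists_lt_of_sum_lt (f := fun _ => n) (g := fun a => t (.inl a))
    (s := .univ) (by rwa [Finset.sum_const, smul_eq_mul, Finset.card_univ])
  obtain ⟨b, -, hb⟩ := Finset.exists_lt_of_sum_lt (f := fun _ => n) (g := fun b => t (.inr b))
    (s := .univ) (by rwa [Finset.sum_const, smul_eq_mul, Finset.card_univ])
  refine J.mem_of_dvd ?_ (hJ a b)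
  rw [mul_pow, X_pow_eq_monomial, X_pow_eq_monomial, monomial_mul, one_mul, monomial_dvd_monomial]
  refine ⟨.inr fun i => ?_, one_dvd _⟩
  rcases i with i | i
  · obtain rfl | h := eq_or_ne a i <;> simp [ha.le, *]
  · obtain rfl | h := eq_or_ne b i <;> simp [hb.le, *]

theorem span_col_macaulayMatrix_eq_top (hf : ∀ p, IsWeightedHomogeneous bidegree (f p) (1, 1))
    {N : ℕ}
    (hJ : ∀ t ∈ bihomogeneousMonomials A B (N + 1), monomial t 1 ∈ Ideal.span (Set.range f)) :
    Submodule.span K (Set.range (macaulayMatrix f N).col) = ⊤ := by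
  let coeffs : MvPolynomial (A ⊕ B) K →ₗ[K] bihomogeneousMonomials A B (N + 1) → K :=
    LinearMap.pi fun t => lcoeff K t.1
  rw [eq_top_iff, ← (Pi.basisFun K _).span_eq, Submodule.span_le]
  rintro _ ⟨t, rfl⟩
  have ht : Pi.basisFun K _ t = coeffs (monomial t.1 1) := by
    ext t'
    classical
    rw [Pi.basisFun_apply]
    change Pi.single t 1 t' = coeff t'.1 (monomial t.1 1)
    rw [Pi.single_apply, coeff_monomial]
    exact if_congr (Subtype.ext_iff.trans eq_comm) rfl rfl
  have hmon : monomial t.1 (1 : K) ∈ Submodule.span K (Set.image2 (fun s p => monomial s 1 * f p)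
      {s | Finsupp.weight bidegree s = (N, N)} .univ) := by
    have hhom : IsWeightedHomogeneous bidegree (monomial t.1 (1 : K)) ((N, N) + (1, 1)) :=
      isWeightedHomogeneous_monomial _ _ _ (mem_bihomogeneousMonomials.1 t.2)
    simpa only [hhom.weightedHomogeneousComponent_same] using
      weightedHomogeneousComponent_mem_span_monomial_mul hf (N, N) (hJ t t.2)
  have := Submodule.mem_map_of_mem (f := coeffs) hmon
  rw [Submodule.map_span] at this
  rw [ht]
  refine Submodule.span_mono ?_ this
  rintro _ ⟨_, ⟨s, hs, p, -, rfl⟩, rfl⟩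
  exact ⟨(⟨s, mem_bihomogeneousMonomials.2 hs⟩, p), rfl⟩

theorem exists_common_zero_iff_forall_det_macaulayMatrix_eq_zero [IsAlgClosed K]
    (hf : ∀ p, IsWeightedHomogeneous bidegree (f p) (1, 1)) :
    (∃ (x : A → K) (y : B → K), x ≠ 0 ∧ y ≠ 0 ∧ ∀ p, eval (Sum.elim x y) (f p) = 0) ↔
      ∀ N (e : bihomogeneousMonomials A B (N + 1) ↪ bihomogeneousMonomials A B N × P),
        ((macaulayMatrix f N).submatrix id e).det = 0 := by
  refine ⟨fun ⟨x, y, hx, hy, hxy⟩ => det_macaulayMatrix_submatrix_eq_zero hf hx hy hxy,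
    fun h => ?_⟩
  by_contra! hno
  let J := Ideal.span (Set.range f)
  let XY := Ideal.span (Set.range fun ab : A × B =>
    (X (.inl ab.1) * X (.inr ab.2) : MvPolynomial (A ⊕ B) K))
  obtain ⟨n, hn⟩ : ∃ n, XY ^ n ≤ J :=
    Ideal.exists_pow_le_of_le_radical_of_fg_radical
      (Ideal.span_le.2 <| Set.range_subset_iff.2 fun ab => X_mul_X_mem_radical_span hno ab.1 ab.2)
      (IsNoetherian.noetherian _)
  let N := n * (Fintype.card A + Fintype.card B)
  have hJ : ∀ t ∈ bihomogeneousMonomials A B (N + 1), monomial t 1 ∈ J := by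
    intro t ht
    rw [mem_bihomogeneousMonomials, weight_bidegree, Prod.mk.injEq] at ht
    refine monomial_mem_of_X_mul_X_pow_mem
      (fun a b => hn (Ideal.pow_mem_pow (Ideal.subset_span (Set.mem_range_self (a, b))) n)) ?_ ?_
    · rw [ht.1, Nat.lt_succ_iff, mul_comm]
      exact Nat.mul_le_mul_left n (Nat.le_add_right _ _)
    · rw [ht.2, Nat.lt_succ_iff, mul_comm]
      exact Nat.mul_le_mul_left n (Nat.le_add_left _ _)
  obtain ⟨e, he⟩ := Matrix.exists_det_submatrix_ne_zero_of_span_col_eq_top _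
    (span_col_macaulayMatrix_eq_top hf hJ)
  exact he (h N e)

theorem exists_common_zero_iff_forall_mem_macaulayMinors [IsAlgClosed K] {Γ : Type*}
    {F : P → MvPolynomial (A ⊕ B) (MvPolynomial Γ K)}
    (hF : ∀ p, IsWeightedHomogeneous bidegree (F p) (1, 1)) (c : Γ → K) :
    (∃ (x : A → K) (y : B → K), x ≠ 0 ∧ y ≠ 0 ∧
      ∀ p, eval (Sum.elim x y) (map (eval c) (F p)) = 0) ↔
    ∀ g ∈ macaulayMinors F, eval c g = 0 := by
  have hdet : ∀ N (e : bihomogeneousMonomials A B (N + 1) ↪ bihomogeneousMonomials A B N × P),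
      eval c ((macaulayMatrix F N).submatrix id e).det =
        ((macaulayMatrix (fun p => map (eval c) (F p)) N).submatrix id e).det := fun N e => by
    rw [RingHom.map_det, RingHom.mapMatrix_apply, ← Matrix.submatrix_map, macaulayMatrix_map]
  rw [exists_common_zero_iff_forall_det_macaulayMatrix_eq_zero fun p => (hF p).map (eval c)]
  refine ⟨?_, fun h N e => hdet N e ▸ h _ ⟨N, e, rfl⟩⟩
  rintro h _ ⟨N, e, rfl⟩
  exact (hdet N e).trans (h N e)

end Elimination

section Products

variable {σ R : Type*} [CommSemiring R]

noncomputable def ofCoeffs (s : Finset (σ →₀ ℕ)) : (s → R) →ₗ[R] MvPolynomial σ R where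
  toFun q := ∑ a ∈ s.attach, monomial (a : σ →₀ ℕ) (q a)
  map_add' q q' := by simp only [Pi.add_apply, map_add, Finset.sum_add_distrib]
  map_smul' r q := by
    simp only [Pi.smul_apply, Finset.smul_sum, smul_monomial, RingHom.id_apply]

theorem coeff_ofCoeffs {s : Finset (σ →₀ ℕ)} (q : s → R) (a : s) :
    coeff a (ofCoeffs s q) = q a := by
  classical
  simp only [ofCoeffs, LinearMap.coe_mk, AddHom.coe_mk, coeff_sum, coeff_monomial]
  rw [Finset.sum_eq_single_of_mem a (Finset.mem_attach _ _) fun b _ hb =>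
    if_neg fun hba => hb (Subtype.ext hba), if_pos rfl]

theorem coeff_ofCoeffs_of_notMem {s : Finset (σ →₀ ℕ)} (q : s → R) {t : σ →₀ ℕ} (ht : t ∉ s) :
    coeff t (ofCoeffs s q) = 0 := by
  classical
  simp only [ofCoeffs, LinearMap.coe_mk, AddHom.coe_mk, coeff_sum, coeff_monomial]
  exact Finset.sum_eq_zero fun a _ => if_neg fun (hat : (a : σ →₀ ℕ) = t) => ht (hat ▸ a.2)

theorem support_ofCoeffs_subset (s : Finset (σ →₀ ℕ)) (q : s → R) :
    (ofCoeffs s q).support ⊆ s :=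
  fun _ ht => by_contra fun h => mem_support_iff.1 ht (coeff_ofCoeffs_of_notMem q h)

theorem ofCoeffs_coeff {s : Finset (σ →₀ ℕ)} {φ : MvPolynomial σ R} (hφ : φ.support ⊆ s) :
    ofCoeffs s (fun a => coeff a φ) = φ := by
  ext t
  by_cases ht : t ∈ s
  · exact coeff_ofCoeffs _ ⟨t, ht⟩
  · rw [coeff_ofCoeffs_of_notMem _ ht, notMem_support_iff.1 fun h => ht (hφ h)]

theorem ofCoeffs_injective (s : Finset (σ →₀ ℕ)) : Function.Injective (ofCoeffs (R := R) s) := by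
  intro q q' h
  ext a
  rw [← coeff_ofCoeffs q, h, coeff_ofCoeffs]

theorem map_ofCoeffs {S : Type*} [CommSemiring S] (g : R →+* S) (s : Finset (σ →₀ ℕ))
    (q : s → R) : map g (ofCoeffs s q) = ofCoeffs s (g ∘ q) := by
  simp [ofCoeffs, map_monomial]

theorem map_eval_map_C {τ : Type*} (c : τ → R) (φ : MvPolynomial σ R) :
    map (eval c) (map C φ) = φ := by
  rw [map_map, eval, eval₂Hom_comp_C, map_id]

variable (s s' : Finset (σ →₀ ℕ))

noncomputable def mulCoeffForm (k : σ →₀ ℕ) : MvPolynomial (s ⊕ s') R :=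
  coeff k (ofCoeffs s (X ∘ .inl) * ofCoeffs s' (X ∘ .inr))

theorem eval_mulCoeffForm (x : s → R) (y : s' → R) (k : σ →₀ ℕ) :
    eval (Sum.elim x y) (mulCoeffForm s s' k) = coeff k (ofCoeffs s x * ofCoeffs s' y) := by
  rw [mulCoeffForm, ← coeff_map, map_mul, map_ofCoeffs, map_ofCoeffs]
  congr <;> ext <;> simp

theorem isWeightedHomogeneous_mulCoeffForm (k : σ →₀ ℕ) :
    IsWeightedHomogeneous bidegree (mulCoeffForm (R := R) s s' k) (1, 1) := by
  classical
  have hcoeff (t : Finset (σ →₀ ℕ)) (v : t → s ⊕ s') (m : ℕ × ℕ) (hv : ∀ a, bidegree (v a) = m)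
      (u : σ →₀ ℕ) : IsWeightedHomogeneous bidegree
        (coeff u (ofCoeffs t (X ∘ v) : MvPolynomial σ (MvPolynomial (s ⊕ s') R))) m := by
    by_cases hu : u ∈ t
    · rw [show u = ((⟨u, hu⟩ : t) : σ →₀ ℕ) from rfl, coeff_ofCoeffs]
      exact hv _ ▸ isWeightedHomogeneous_X R _ _
    · rw [coeff_ofCoeffs_of_notMem _ hu]
      exact isWeightedHomogeneous_zero R _ _
  rw [mulCoeffForm, coeff_mul]
  exact IsWeightedHomogeneous.sum _ _ _ fun uv _ =>
    (hcoeff s _ (1, 0) (fun _ => rfl) uv.1).mul (hcoeff s' _ (0, 1) (fun _ => rfl) uv.2)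

noncomputable def proportionalityForm {S : Type*} [CommRing S] (u : Finset (σ →₀ ℕ))
    (ij : u × u) : MvPolynomial (s ⊕ s') (MvPolynomial u S) :=
  C (X ij.2) * map C (mulCoeffForm s s' ij.1) - C (X ij.1) * map C (mulCoeffForm s s' ij.2)

theorem isWeightedHomogeneous_proportionalityForm {S : Type*} [CommRing S]
    (u : Finset (σ →₀ ℕ)) (ij : u × u) :
    IsWeightedHomogeneous bidegree (proportionalityForm (S := S) s s' u ij) (1, 1) :=
  (((isWeightedHomogeneous_mulCoeffForm s s' _).map C).C_mul _).sub
    (((isWeightedHomogeneous_mulCoeffForm s s' _).map C).C_mul _)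

variable {K : Type*} [Field K]

theorem eval_map_proportionalityForm {u : Finset (σ →₀ ℕ)} (c : u → K) (x : s → K) (y : s' → K)
    (ij : u × u) :
    eval (Sum.elim x y) (map (eval c) (proportionalityForm s s' u ij)) =
      c ij.2 * coeff ij.1 (ofCoeffs s x * ofCoeffs s' y) -
        c ij.1 * coeff ij.2 (ofCoeffs s x * ofCoeffs s' y) := by
  simp [proportionalityForm, map_eval_map_C, eval_mulCoeffForm]

open Pointwise

variable {s s'} [DecidableEq σ]

theorem exists_mul_eq_ofCoeffs_iff_exists_common_zero {c : (s + s' : Finset (σ →₀ ℕ)) → K}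
    (hc : c ≠ 0) :
    (∃ Q R : MvPolynomial σ K, Q ≠ 0 ∧ R ≠ 0 ∧ Q.support ⊆ s ∧ R.support ⊆ s' ∧
      Q * R = ofCoeffs (s + s') c) ↔
    ∃ (x : s → K) (y : s' → K), x ≠ 0 ∧ y ≠ 0 ∧
      ∀ ij, eval (Sum.elim x y) (map (eval c) (proportionalityForm s s' (s + s') ij)) = 0 := by
  have hne {t : Finset (σ →₀ ℕ)} {q : t → K} : ofCoeffs t q ≠ 0 ↔ q ≠ 0 :=
    map_ne_zero_iff _ (ofCoeffs_injective t)
  simp_rw [eval_map_proportionalityForm, sub_eq_zero]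
  constructor
  · rintro ⟨Q, R, hQ, hR, hQs, hRs, hQR⟩
    refine ⟨fun a => coeff a Q, fun b => coeff b R, ?_, ?_, fun ij => ?_⟩
    · rwa [← hne, ofCoeffs_coeff hQs]
    · rwa [← hne, ofCoeffs_coeff hRs]
    · rw [ofCoeffs_coeff hQs, ofCoeffs_coeff hRs, hQR, coeff_ofCoeffs, coeff_ofCoeffs, mul_comm]
  · rintro ⟨x, y, hx, hy, hxy⟩
    set φ := ofCoeffs s x * ofCoeffs s' y with hφ
    have hφs : φ.support ⊆ s + s' := (support_mul _ _).trans
      (Finset.add_subset_add (support_ofCoeffs_subset s x) (support_ofCoeffs_subset s' y))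
    obtain ⟨l, hl⟩ := exists_eq_smul_of_mul_eq_mul
      (u := fun k : (s + s' : Finset (σ →₀ ℕ)) => coeff k φ) hc fun i j => hxy (i, j)
    have hφl : φ = l • ofCoeffs (s + s') c := by rw [← map_smul, ← hl, ofCoeffs_coeff hφs]
    have hl0 : l ≠ 0 := by
      rintro rfl
      rw [zero_smul] at hφl
      exact mul_ne_zero (hne.2 hx) (hne.2 hy) hφl
    refine ⟨l⁻¹ • ofCoeffs s x, ofCoeffs s' y, smul_ne_zero (inv_ne_zero hl0) (hne.2 hx),
      hne.2 hy, support_smul.trans (support_ofCoeffs_subset s x), support_ofCoeffs_subset s' y, ?_⟩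
    rw [smul_mul_assoc, ← hφ, hφl, smul_smul, inv_mul_cancel₀ hl0, one_smul]

end Products

end MvPolynomial

open Pointwise

theorem stmt13_general {K : Type*} [Field K] [IsAlgClosed K] (n : ℕ)
    (I' I'' : Finset (Fin n →₀ ℕ)) :
    ∃ S : Set (MvPolynomial {k // k ∈ I' + I''} K),
      ∀ c : {k // k ∈ I' + I''} → K, (∃ k, c k ≠ 0) →
        ((∃ Q R : MvPolynomial (Fin n) K, Q ≠ 0 ∧ R ≠ 0 ∧
            Q.support ⊆ I' ∧ R.support ⊆ I'' ∧
            Q * R = ∑ k ∈ (I' + I'').attach, MvPolynomial.monomial (k : Fin n →₀ ℕ) (c k))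
          ↔ ∀ g ∈ S, MvPolynomial.eval c g = 0) := by
  refine ⟨macaulayMinors (proportionalityForm I' I'' (I' + I'')), fun c hc => ?_⟩
  rw [← exists_common_zero_iff_forall_mem_macaulayMinors
    (isWeightedHomogeneous_proportionalityForm I' I'' _)]
  exact exists_mul_eq_ofCoeffs_iff_exists_common_zero (Function.ne_iff.2 hc)

theorem stmt13 {K : Type*} [Field K] [IsAlgClosed K] (n : ℕ)
    (I' I'' : Finset (Fin n →₀ ℕ)) (h' : I'.Nonempty) (h'' : I''.Nonempty) :
    ∃ S : Set (MvPolynomial {k // k ∈ I' + I''} K),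
      ∀ c : {k // k ∈ I' + I''} → K, (∃ k, c k ≠ 0) →
        ((∃ Q R : MvPolynomial (Fin n) K, Q ≠ 0 ∧ R ≠ 0 ∧
            Q.support ⊆ I' ∧ R.support ⊆ I'' ∧
            Q * R = ∑ k ∈ (I' + I'').attach, MvPolynomial.monomial (k : Fin n →₀ ℕ) (c k))
          ↔ ∀ g ∈ S, MvPolynomial.eval c g = 0) :=
  stmt13_general n I' I''
end

section
/- Let K be an algebraically closed field and s₁, t₁, s₂, t₂ ∈ ℤ with s₁t₂ − s₂t₁ ≠ 0, and ε₁, ε₂ ∈ K*. Then the system x^{s₁} y^{t₁} = ε₁, x^{s₂} y^{t₂} = ε₂ has a solution with x, y ∈ K*. -/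
/-! Extract a `d`-th root `a` of `ε₁` and `b` of `ε₂`, where `d = s₁ t₂ - s₂ t₁`. Inverting the
exponent matrix over `ℤ[1/d]` suggests `x = a ^ t₂ * b ^ (-t₁)`, `y = a ^ (-s₂) * b ^ s₁`: the
exponents of `x ^ sᵢ * y ^ tᵢ` are then the entries of `d` times the identity matrix. -/

theorem IsAlgClosed.exists_units_pow_eq {K : Type*} [Field K] [IsAlgClosed K] {n : ℕ}
    (hn : 0 < n) (u : Kˣ) : ∃ a : Kˣ, a ^ n = u := by
  obtain ⟨z, hz⟩ := IsAlgClosed.exists_pow_nat_eq (u : K) hn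
  have hz0 : z ≠ 0 := by
    rintro rfl
    exact u.ne_zero (by rw [← hz, zero_pow hn.ne'])
  exact ⟨Units.mk0 z hz0, Units.ext (by simpa using hz)⟩

theorem IsAlgClosed.exists_units_zpow_eq {K : Type*} [Field K] [IsAlgClosed K] {d : ℤ}
    (hd : d ≠ 0) (u : Kˣ) : ∃ a : Kˣ, a ^ d = u := by
  obtain ⟨a, ha⟩ := exists_units_pow_eq (Int.natAbs_pos.2 hd) u
  rcases Int.natAbs_eq d with hd' | hd'
  · exact ⟨a, by rw [hd', zpow_natCast, ha]⟩
  · exact ⟨a⁻¹, by rw [hd', inv_zpow', neg_neg, zpow_natCast, ha]⟩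

theorem mul_zpow_mul_zpow_eq_zpow_mul_zpow {G : Type*} [CommGroup G] (a b : G) (p q r u s t : ℤ) :
    (a ^ p * b ^ q) ^ s * (a ^ r * b ^ u) ^ t = a ^ (p * s + r * t) * b ^ (q * s + u * t) := by
  rw [mul_zpow, mul_zpow, ← zpow_mul, ← zpow_mul, ← zpow_mul, ← zpow_mul,
    mul_mul_mul_comm, ← zpow_add, ← zpow_add]

theorem exists_zpow_mul_zpow_eq_of_forall_exists_zpow_eq {G : Type*} [CommGroup G]
    {s₁ t₁ s₂ t₂ : ℤ} (hroot : ∀ g : G, ∃ a : G, a ^ (s₁ * t₂ - s₂ * t₁) = g) (ε₁ ε₂ : G) :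
    ∃ x y : G, x ^ s₁ * y ^ t₁ = ε₁ ∧ x ^ s₂ * y ^ t₂ = ε₂ := by
  obtain ⟨a, rfl⟩ := hroot ε₁
  obtain ⟨b, rfl⟩ := hroot ε₂
  refine ⟨a ^ t₂ * b ^ (-t₁), a ^ (-s₂) * b ^ s₁, ?_, ?_⟩
  · rw [mul_zpow_mul_zpow_eq_zpow_mul_zpow, show -t₁ * s₁ + s₁ * t₁ = 0 by ring, zpow_zero,
      mul_one]
    congr 1; ring
  · rw [mul_zpow_mul_zpow_eq_zpow_mul_zpow, show t₂ * s₂ + -s₂ * t₂ = 0 by ring, zpow_zero,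
      one_mul]
    congr 1; ring

theorem stmt14 {K : Type*} [Field K] [IsAlgClosed K] (s₁ t₁ s₂ t₂ : ℤ)
    (h : s₁ * t₂ - s₂ * t₁ ≠ 0) (ε₁ ε₂ : Kˣ) :
    ∃ x y : Kˣ, x ^ s₁ * y ^ t₁ = ε₁ ∧ x ^ s₂ * y ^ t₂ = ε₂ :=
  exists_zpow_mul_zpow_eq_of_forall_exists_zpow_eq (IsAlgClosed.exists_units_zpow_eq h) ε₁ ε₂
end

section
/- Let K be an algebraically closed field, q, r ∈ ℤⁿ linearly independent over ℚ, and ε, η ∈ K*. Then there exists x = (x₁,…,xₙ) ∈ (K*)ⁿ with x^q = ε and x^r = η. -/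
/-!
Some 2 × 2 minor `D = q i * r j - q j * r i` of the exponent vectors is nonzero. Supporting `x`
on the coordinates `i, j` turns the two equations into `y ^ q i * z ^ q j = ε` and
`y ^ r i * z ^ r j = η`, which Cramer's rule solves in the exponents once `ε` and `η` have
`D`-th roots, as they do in an algebraically closed field.
-/

lemma IsAlgClosed.exists_pow_eq_units {K : Type*} [Field K] [IsAlgClosed K] (ε : Kˣ) {n : ℕ}
    (hn : n ≠ 0) : ∃ δ : Kˣ, δ ^ n = ε := by
  obtain ⟨z, hz⟩ := IsAlgClosed.exists_pow_nat_eq (ε : K) (Nat.pos_of_ne_zero hn)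
  have hz0 : z ≠ 0 := by
    rintro rfl
    exact ε.ne_zero (by rw [← hz, zero_pow hn])
  exact ⟨Units.mk0 z hz0, Units.ext (by simpa using hz)⟩

lemma IsAlgClosed.exists_zpow_eq_units {K : Type*} [Field K] [IsAlgClosed K] (ε : Kˣ) {n : ℤ}
    (hn : n ≠ 0) : ∃ δ : Kˣ, δ ^ n = ε :=
  letI : RootableBy Kˣ ℕ := rootableByOfPowLeftSurj _ _ fun hm ε ↦ exists_pow_eq_units ε hm
  letI := Group.rootableByIntOfRootableByNat Kˣ
  RootableBy.surjective_pow _ _ hn ε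

lemma exists_mul_sub_mul_ne_zero_of_linearIndependent {F ι : Type*} [Field F] {u v : ι → F}
    (huv : LinearIndependent F ![u, v]) : ∃ i j, u i * v j - u j * v i ≠ 0 := by
  by_contra! hminors
  rw [LinearIndependent.pair_iff] at huv
  by_cases hu : u = 0
  · exact one_ne_zero (huv 1 0 (by simp [hu])).1
  obtain ⟨i, hi⟩ := Function.ne_iff.mp hu
  refine hi (neg_eq_zero.mp (huv (v i) (-u i) (funext fun k ↦ ?_)).2)
  simp only [Pi.add_apply, Pi.smul_apply, smul_eq_mul, Pi.zero_apply]
  linear_combination -hminors i k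

lemma Fintype.prod_zpow_mulSingle_mul_mulSingle {G ι : Type*} [CommGroup G] [Fintype ι]
    [DecidableEq ι] (f : ι → ℤ) (i j : ι) (a b : G) :
    ∏ t, (Pi.mulSingle i a * Pi.mulSingle j b : ι → G) t ^ f t = a ^ f i * b ^ f j := by
  have prod_single (k : ι) (c : G) : ∏ t, Pi.mulSingle k c t ^ f t = c ^ f k :=
    (prod_eq_single k fun t ht ↦ by simp [Pi.mulSingle_eq_of_ne ht]).trans (by simp)
  simp only [Pi.mul_apply, mul_zpow, Finset.prod_mul_distrib, prod_single]

lemma exists_zpow_mul_zpow_eq_of_zpow_det_eq {G : Type*} [CommGroup G] {a b c d : ℤ}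
    {δ τ ε η : G} (hδ : δ ^ (a * d - b * c) = ε) (hτ : τ ^ (a * d - b * c) = η) :
    ∃ y z : G, y ^ a * z ^ b = ε ∧ y ^ c * z ^ d = η := by
  refine ⟨δ ^ d * τ ^ (-b), δ ^ (-c) * τ ^ a, ?_, ?_⟩ <;>
    simp only [mul_zpow, ← zpow_mul] <;> rw [mul_mul_mul_comm, ← zpow_add, ← zpow_add]
  · rw [← hδ, show -b * a + a * b = 0 by ring, zpow_zero, mul_one]
    congr 1
    ring
  · rw [← hτ, show d * c + -c * d = 0 by ring, zpow_zero, one_mul]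
    congr 1
    ring

theorem stmt15 {K : Type*} [Field K] [IsAlgClosed K] (n : ℕ) (q r : Fin n → ℤ)
    (hqr : LinearIndependent ℚ ![(fun t => (q t : ℚ)), (fun t => (r t : ℚ))])
    (ε η : Kˣ) :
    ∃ x : Fin n → Kˣ, (∏ t, x t ^ q t) = ε ∧ (∏ t, x t ^ r t) = η := by
  obtain ⟨i, j, hD⟩ := exists_mul_sub_mul_ne_zero_of_linearIndependent hqr
  replace hD : q i * r j - q j * r i ≠ 0 := by exact_mod_cast hD
  obtain ⟨δ, hδ⟩ := IsAlgClosed.exists_zpow_eq_units ε hD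
  obtain ⟨τ, hτ⟩ := IsAlgClosed.exists_zpow_eq_units η hD
  obtain ⟨y, z, hq, hr⟩ := exists_zpow_mul_zpow_eq_of_zpow_det_eq hδ hτ
  refine ⟨Pi.mulSingle i y * Pi.mulSingle j z, ?_, ?_⟩ <;>
    rwa [Fintype.prod_zpow_mulSingle_mul_mulSingle]
end

section
/- Let K be an algebraically closed field and let i, j, k ∈ ℕⁿ be non-collinear points with componentwise infimum of {i, j, k} equal to 0, such that there is no prime p with char K = p and i, j, k ∈ pℕⁿ. Then every polynomial P = a_i X^i + a_j X^j + a_k X^k with a_i, a_j, a_k ∈ K* is irreducible. -/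
/-!
Write `u = j - i` and `v = k - i`, and suppose `P = F * G`. As `u` and `v` are linearly
independent, there is an integer weight `r` with `r ⬝ u = 0 < r ⬝ v`; choose also a natural
weight `s` that separates the exponents of `F` and `G` and whose value on `u` is nonzero in `K`
(the characteristic hypothesis provides this after possibly exchanging `j` and `k`). The
substitution `X t ↦ Y ^ s t * T ^ r t` into `K[Y][T, T⁻¹]` sends `P` to a unit times
`Y ^ μ * (a Y ^ e₁ + b Y ^ e₂ + c Y ^ e₃ T ^ d)` with `d > 0`, and the second factor is
Eisenstein at `Y - ρ` for a simple nonzero root `ρ` of `a Y ^ e₁ + b Y ^ e₂`. Hence the image of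
`F` or of `G` is a monomial `c Y ^ e T ^ z`. Since `s` separates exponents, that factor is itself
a monomial, and a monomial dividing `P` is a constant because the exponents of `P` have
infimum `0`.
-/

open Polynomial

section LinearAlgebra

theorem ne_of_not_collinear {k V : Type*} [Field k] [AddCommGroup V] [Module k V] {x y z : V}
    (h : ¬ Collinear k ({x, y, z} : Set V)) : x ≠ y ∧ x ≠ z ∧ y ≠ z := by
  refine ⟨?_, ?_, ?_⟩ <;> rintro rfl <;> simp [collinear_pair] at h

theorem collinear_of_smul_sub_add_smul_sub_eq_zero {k V : Type*} [Field k] [AddCommGroup V]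
    [Module k V] {x y z : V} {α β : k} (h : α • (y - x) + β • (z - x) = 0)
    (hαβ : α ≠ 0 ∨ β ≠ 0) : Collinear k ({x, y, z} : Set V) := by
  by_cases hβ : β = 0
  · have hyx : y = x := by
      simpa [hβ, hαβ.resolve_right (not_not.mpr hβ), sub_eq_zero] using h
    simp [hyx, collinear_pair]
  · have hz : z = (-α / β) • (y - x) + x := by
      refine eq_add_of_sub_eq (smul_right_injective V hβ ?_)
      simp only [smul_smul, mul_div_cancel₀ _ hβ, neg_smul]
      exact eq_neg_of_add_eq_zero_right h
    rw [Set.pair_comm y z, Set.insert_comm x z, hz]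
    exact collinear_insert_of_mem_affineSpan_pair (smul_vsub_vadd_mem_affineSpan_pair _ _ _)

theorem exists_dotProduct_eq_zero_and_pos {ι R : Type*} [Fintype ι] [CommRing R] [LinearOrder R]
    [IsStrictOrderedRing R] (u v : ι → R)
    (huv : ∀ α β : R, α • u + β • v = 0 → α = 0 ∧ β = 0) :
    ∃ r : ι → R, r ⬝ᵥ u = 0 ∧ 0 < r ⬝ᵥ v := by
  have self_pos : ∀ w : ι → R, w ≠ 0 → 0 < w ⬝ᵥ w := fun w hw =>
    (Finset.sum_nonneg fun t _ => mul_self_nonneg (w t)).lt_of_ne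
      (Ne.symm (mt dotProduct_self_eq_zero.mp hw))
  set r := (u ⬝ᵥ u) • v - (u ⬝ᵥ v) • u with hr_def
  have hu : u ≠ 0 := fun hu => one_ne_zero (huv 1 0 (by simp [hu])).1
  have hr : r ≠ 0 := fun hr => by
    have := (huv (-(u ⬝ᵥ v)) (u ⬝ᵥ u) (by rw [← hr]; module)).2
    exact hu (dotProduct_self_eq_zero.mp this)
  have hru : r ⬝ᵥ u = 0 := by
    simp only [r, sub_dotProduct, smul_dotProduct, smul_eq_mul, dotProduct_comm v u]; ring
  -- `0 < r ⬝ v` because `r ⬝ r = (u ⬝ u) (r ⬝ v)` and `r ≠ 0`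
  have hrr : r ⬝ᵥ r = (u ⬝ᵥ u) * (r ⬝ᵥ v) := by
    calc r ⬝ᵥ r = r ⬝ᵥ ((u ⬝ᵥ u) • v - (u ⬝ᵥ v) • u) := by rw [← hr_def]
      _ = (u ⬝ᵥ u) * (r ⬝ᵥ v) := by simp [dotProduct_sub, hru]
  exact ⟨r, hru, pos_of_mul_pos_right (hrr ▸ self_pos r hr) (self_pos u hu).le⟩

end LinearAlgebra

theorem Polynomial.exists_nat_forall_eval_ne_zero {ι : Type*} (S : Finset ι) (D : ι → ℤ[X])
    (hD : ∀ x ∈ S, D x ≠ 0) : ∃ M : ℕ, ∀ x ∈ S, (D x).eval (M : ℤ) ≠ 0 := by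
  have hfin : {M : ℕ | ∃ x ∈ S, (D x).IsRoot M}.Finite :=
    (S.finite_toSet.biUnion fun x hx => (finite_setOfPred_isRoot (hD x hx)).preimage
      Nat.cast_injective.injOn).subset fun M ⟨x, hx, hM⟩ => Set.mem_biUnion hx hM
  obtain ⟨M, hM⟩ := hfin.infinite_compl.nonempty
  exact ⟨M, fun x hx h => hM ⟨x, hx, h⟩⟩

section Weights

open Finsupp

theorem Finsupp.weight_eq_dotProduct {σ : Type*} [Fintype σ] (r : σ → ℤ) (m : σ →₀ ℕ) :
    weight r m = r ⬝ᵥ fun t => (m t : ℤ) := by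
  simp [weight_eq_sum, dotProduct, mul_comm]

theorem exists_weight_injOn_modEq {n : ℕ} (S : Finset (Fin n →₀ ℕ)) {q : ℕ} (hq : q ≠ 0)
    (t₀ : Fin n) : ∃ s : Fin n → ℕ, Set.InjOn (weight s) (S : Set (Fin n →₀ ℕ)) ∧
      ∀ t, s t ≡ if t = t₀ then 1 else 0 [MOD q] := by
  classical
  -- for `s t = [t = t₀] + q * M ^ (t + 1)`, `weight s m - weight s m'` is the value at `M` of
  -- `D (m - m')`, a polynomial which is nonzero for `m ≠ m'`
  let D : (Fin n → ℤ) → ℤ[X] := fun δ =>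
    C (δ t₀) + C (q : ℤ) * ∑ t, C (δ t) * X ^ ((t : ℕ) + 1)
  let δ : (Fin n →₀ ℕ) × (Fin n →₀ ℕ) → Fin n → ℤ := fun p t => (p.1 t : ℤ) - p.2 t
  have hD : ∀ p ∈ S.offDiag, D (δ p) ≠ 0 := by
    intro p hp hD0
    obtain ⟨t, ht⟩ : ∃ t, p.1 t ≠ p.2 t := by
      by_contra! h
      exact (Finset.mem_offDiag.mp hp).2.2 (Finsupp.ext h)
    have := congrArg (coeff · ((t : ℕ) + 1)) hD0
    simp only [D, coeff_add, coeff_C, coeff_C_mul, finsetSum_coeff, coeff_X_pow,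
      add_left_inj, Fin.val_inj, mul_ite, mul_one, mul_zero, Finset.sum_ite_eq, Finset.mem_univ,
      if_true, Nat.add_one_ne_zero, if_false, zero_add, coeff_zero] at this
    simp_all [δ, sub_eq_zero]
  obtain ⟨M, hM⟩ := exists_nat_forall_eval_ne_zero S.offDiag _ hD
  refine ⟨fun t => (if t = t₀ then 1 else 0) + q * M ^ ((t : ℕ) + 1), ?_, fun t => ?_⟩
  · intro m hm m' hm' heq
    by_contra hne
    refine hM (m, m') (Finset.mem_offDiag.mpr ⟨hm, hm', hne⟩) ?_
    have := congrArg (fun x : ℕ => (x : ℤ)) heq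
    simp only [weight_eq_sum, smul_eq_mul, mul_add, Finset.sum_add_distrib, mul_ite,
      mul_one, mul_zero, Finset.sum_ite_eq', Finset.mem_univ, if_true] at this
    push_cast at this
    simp only [D, δ, eval_add, eval_C, eval_mul, eval_finsetSum, eval_pow, eval_X]
    rw [← sub_eq_zero.mpr this, add_sub_add_comm, ← Finset.sum_sub_distrib, Finset.mul_sum]
    exact congrArg _ (Finset.sum_congr rfl fun t _ => by ring)
  · simp [Nat.ModEq, Nat.add_mul_mod_self_left]

theorem exists_weight_injOn_natCast_ne {K : Type*} [Field K] {n : ℕ} (S : Finset (Fin n →₀ ℕ))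
    {i j : Fin n →₀ ℕ} (hi : i ∈ S) (hj : j ∈ S) {t₀ : Fin n} (ht₀ : (i t₀ : K) ≠ j t₀) :
    ∃ s : Fin n → ℕ, Set.InjOn (weight s) (S : Set (Fin n →₀ ℕ)) ∧
      (weight s i : K) ≠ weight s j := by
  rcases Nat.eq_zero_or_pos (ringChar K) with h0 | hp
  · obtain ⟨s, hs, -⟩ := exists_weight_injOn_modEq S one_ne_zero t₀
    refine ⟨s, hs, fun h => ht₀ ?_⟩
    rw [CharP.natCast_eq_natCast K (ringChar K), h0, Nat.modEq_zero_iff] at h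
    rw [hs hi hj h]
  · obtain ⟨s, hs, hmod⟩ := exists_weight_injOn_modEq S hp.ne' t₀
    have hcast : ∀ m : Fin n →₀ ℕ, (weight s m : K) = m t₀ := fun m => by
      have hst : ∀ t, (s t : K) = if t = t₀ then 1 else 0 := fun t => by
        rw [(CharP.natCast_eq_natCast K (ringChar K)).mpr (hmod t)]; split_ifs <;> simp
      simp [weight_eq_sum, hst]
    exact ⟨s, hs, by rwa [hcast, hcast]⟩

end Weights

namespace Polynomial

theorem exists_ne_zero_root_not_sq_dvd {K : Type*} [Field K] [IsAlgClosed K] {a b : K}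
    (ha : a ≠ 0) (hb : b ≠ 0) {e₁ e₂ : ℕ} (he : (e₁ : K) ≠ e₂) :
    ∃ ρ : K, ρ ≠ 0 ∧ X - C ρ ∣ C a * X ^ e₁ + C b * X ^ e₂ ∧
      ¬ (X - C ρ) ^ 2 ∣ C a * X ^ e₁ + C b * X ^ e₂ := by
  wlog hlt : e₁ < e₂ generalizing a b e₁ e₂
  · have hne : e₁ ≠ e₂ := fun h => he (congrArg _ h)
    rw [add_comm]
    exact this hb ha (Ne.symm he) (by omega)
  obtain ⟨ρ, hρ⟩ := IsAlgClosed.exists_pow_nat_eq (-a / b) (Nat.sub_pos_of_lt hlt)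
  have hρ0 : ρ ≠ 0 := by
    rintro rfl
    rw [zero_pow (Nat.sub_pos_of_lt hlt).ne'] at hρ
    exact div_ne_zero (neg_ne_zero.mpr ha) hb hρ.symm
  have hroot : a * ρ ^ e₁ + b * ρ ^ e₂ = 0 := by
    rw [← Nat.add_sub_cancel' hlt.le, pow_add, hρ]
    field_simp
    ring
  refine ⟨ρ, hρ0, dvd_iff_isRoot.mpr (by simpa using hroot), fun hsq => ?_⟩
  -- a double root is a root of the derivative, and `ρ f'(ρ) = (e₂ - e₁) b ρ ^ e₂ ≠ 0`
  have hder : (derivative (C a * X ^ e₁ + C b * X ^ e₂)).IsRoot ρ :=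
    dvd_iff_isRoot.mp (by simpa using pow_sub_one_dvd_derivative_of_pow_dvd hsq)
  have hmul : ∀ e : ℕ, ρ * ((e : K) * ρ ^ (e - 1)) = e * ρ ^ e := by
    rintro (_ | e)
    · simp
    · simp [pow_succ]; ring
  simp only [derivative_add, derivative_C_mul_X_pow, IsRoot.def, eval_add, eval_mul, eval_C,
    eval_pow, eval_X] at hder
  have : ((e₂ : K) - e₁) * (b * ρ ^ e₂) = 0 := by
    linear_combination ρ * hder - (e₁ : K) * hroot - a * hmul e₁ - b * hmul e₂
  simp [sub_eq_zero, Ne.symm he, hb, hρ0] at this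

theorem irreducible_C_add_C_mul_X_pow {R : Type*} [CommRing R] [IsDomain R] {π x y : R}
    (hπ : Prime π) (hx : π ∣ x) (hx2 : ¬ π ^ 2 ∣ x) (hy : ¬ π ∣ y)
    (hxy : ∀ r, r ∣ x → r ∣ y → IsUnit r) {d : ℕ} (hd : 0 < d) :
    Irreducible (C x + C y * X ^ d) := by
  have hy0 : y ≠ 0 := fun hy0 => hy (hy0 ▸ dvd_zero π)
  have hdeg : (C x + C y * X ^ d).degree = (d : WithBot ℕ) := by
    rw [add_comm, degree_add_eq_left_of_degree_lt] <;> rw [degree_C_mul_X_pow d hy0]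
    exact degree_C_le.trans_lt (by exact_mod_cast hd)
  have hcoeff : ∀ m, (C x + C y * X ^ d).coeff m =
      (if m = 0 then x else 0) + if m = d then y else 0 := by
    intro m; simp [coeff_C, coeff_X_pow]
  refine irreducible_of_eisenstein_criterion ((Ideal.span_singleton_prime hπ.ne_zero).mpr hπ)
    ?_ ?_ (by rw [hdeg]; exact_mod_cast hd) ?_ ?_
  · rw [leadingCoeff, natDegree_eq_of_degree_eq_some hdeg, hcoeff, if_neg hd.ne', if_pos rfl,
      zero_add, Ideal.mem_span_singleton]
    exact hy
  · intro m hm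
    rw [hdeg, Nat.cast_lt] at hm
    rw [hcoeff, if_neg hm.ne, add_zero, Ideal.mem_span_singleton]
    split_ifs
    exacts [hx, dvd_zero π]
  · rwa [hcoeff, if_pos rfl, if_neg hd.ne, add_zero, Ideal.span_singleton_pow,
      Ideal.mem_span_singleton]
  · refine fun r hr => hxy r ?_ ?_
    · simpa [hcoeff, hd.ne] using (C_dvd_iff_dvd_coeff r _).mp hr 0
    · simpa [hcoeff, hd.ne'] using (C_dvd_iff_dvd_coeff r _).mp hr d

theorem irreducible_C_add_C_mul_X_pow_of_trinomial {K : Type*} [Field K] [IsAlgClosed K]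
    {a b c : K} (ha : a ≠ 0) (hb : b ≠ 0) (hc : c ≠ 0) {e₁ e₂ e₃ d : ℕ} (he : (e₁ : K) ≠ e₂)
    (hmin : min e₁ (min e₂ e₃) = 0) (hd : 0 < d) :
    Irreducible (C (C a * X ^ e₁ + C b * X ^ e₂) + C (C c * X ^ e₃) * X ^ d : K[X][X]) := by
  obtain ⟨ρ, hρ0, hdvd, hsq⟩ := exists_ne_zero_root_not_sq_dvd ha hb he
  refine irreducible_C_add_C_mul_X_pow (prime_X_sub_C ρ) hdvd hsq
    (by simp [dvd_iff_isRoot, hc, hρ0]) (fun r hr₁ hr₂ => ?_) hd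
  obtain ⟨_ | e, he₃, hre⟩ := (dvd_prime_pow prime_X _).mp
    ((IsUnit.dvd_mul_left (isUnit_C.mpr hc.isUnit)).mp hr₂)
  · simpa using hre
  -- otherwise `X` divides both coefficients, which `min e₁ (min e₂ e₃) = 0` forbids
  have hX : X ∣ C a * X ^ e₁ + C b * X ^ e₂ :=
    (dvd_pow_self X e.succ_ne_zero).trans (hre.symm.dvd.trans hr₁)
  have hne : e₁ ≠ e₂ := fun h => he (congrArg _ h)
  rw [X_dvd_iff] at hX
  rcases (by omega : e₁ = 0 ∨ e₂ = 0) with h0 | h0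
  · simp [coeff_X_pow, h0, show 0 ≠ e₂ by omega, ha] at hX
  · simp [coeff_X_pow, h0, show 0 ≠ e₁ by omega, hb] at hX

end Polynomial

theorem exists_associated_pow_of_associated_mul {M : Type*} [CommMonoidWithZero M]
    [IsCancelMulZero M] {p q x y : M} (hp : Prime p) (hq : Prime q) {μ : ℕ}
    (h : Associated (x * y) (q ^ μ * p)) :
    (∃ e, Associated x (q ^ e)) ∨ ∃ e, Associated y (q ^ e) := by
  wlog hpx : p ∣ x generalizing x y
  · have hpy := (hp.dvd_or_dvd ((dvd_mul_left p _).trans h.symm.dvd)).resolve_left hpx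
    exact (this (mul_comm x y ▸ h) hpy).symm
  obtain ⟨x', rfl⟩ := hpx
  have : Associated (x' * y) (q ^ μ) :=
    Associated.of_mul_right (by rwa [mul_comm, ← mul_assoc]) (Associated.refl p) hp.ne_zero
  obtain ⟨e, -, he⟩ := (dvd_prime_pow hq μ).mp ((dvd_mul_left y x').trans this.dvd)
  exact .inr ⟨e, he⟩

section Laurent

open LaurentPolynomial

variable {R : Type*} [CommRing R] [IsDomain R]

theorem LaurentPolynomial.exists_eq_C_mul_T_of_isUnit {f : R[T;T⁻¹]} (hf : IsUnit f) :
    ∃ u : R, IsUnit u ∧ ∃ z : ℤ, f = C u * T z := by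
  obtain ⟨g, hfg⟩ := hf.exists_right_inv
  obtain ⟨N, f', hf'⟩ := exists_T_pow f
  obtain ⟨M, g', hg'⟩ := exists_T_pow g
  have hf'g' : f' * g' = X ^ (N + M) := toLaurent_injective <| by
    rw [map_mul, hf', hg', toLaurent_X_pow, mul_mul_mul_comm, hfg, one_mul, ← T_add]
    push_cast; rfl
  obtain ⟨a, -, ha⟩ := (dvd_prime_pow prime_X _).mp (Dvd.intro _ hf'g')
  obtain ⟨w, hw⟩ := ha.symm
  obtain ⟨u, hu, hCu⟩ := Polynomial.isUnit_iff.mp w.isUnit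
  refine ⟨u, hu, a - N, ?_⟩
  have : f = toLaurent f' * T (-N) := by
    rw [hf', mul_T_assoc, add_neg_cancel, T_zero, mul_one]
  rw [this, ← hw, ← hCu, map_mul, toLaurent_X_pow, toLaurent_C, T_mul, mul_assoc, ← T_add]
  rfl

theorem LaurentPolynomial.exists_eq_C_mul_T_of_associated_C {f : R[T;T⁻¹]} {x : R}
    (h : Associated f (C x)) : ∃ u : R, IsUnit u ∧ ∃ z : ℤ, f = C (x * u) * T z := by
  obtain ⟨w, hw⟩ := h.symm
  obtain ⟨u, hu, z, hz⟩ := exists_eq_C_mul_T_of_isUnit w.isUnit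
  exact ⟨u, hu, z, by rw [← hw, hz, ← mul_assoc, ← map_mul]⟩

theorem Polynomial.prime_toLaurent {p : R[X]} (hp : Prime p) (hX : ¬ X ∣ p) :
    Prime (toLaurent p) := by
  have hpX : X ∉ Ideal.span {p} := fun h =>
    hX (hp.associated_of_dvd prime_X (Ideal.mem_span_singleton.mp h)).symm.dvd
  have := (Ideal.span_singleton_prime hp.ne_zero).mpr hp
  have := IsLocalization.isPrime_of_isPrime_disjoint (Submonoid.powers X) R[T;T⁻¹] _ this
    ((Ideal.disjoint_powers_iff_notMem_of_isPrime X).mpr hpX)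
  rwa [Ideal.map_span, Set.image_singleton, algebraMap_eq_toLaurent,
    Ideal.span_singleton_prime (toLaurent_ne_zero.mpr hp.ne_zero)] at this

theorem LaurentPolynomial.exists_associated_C_pow_of_mul_eq {π : R} (hπ : Prime π) {Q : R[X]}
    (hQ : Prime Q) (hXQ : ¬ X ∣ Q) {A₁ A₂ : R[T;T⁻¹]} {β : ℤ} {μ : ℕ}
    (h : A₁ * A₂ = T β * C (π ^ μ) * toLaurent Q) :
    (∃ e, Associated A₁ (C (π ^ e))) ∨ ∃ e, Associated A₂ (C (π ^ e)) := by
  have hCπ : Prime (C π : R[T;T⁻¹]) := by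
    simpa using prime_toLaurent (prime_C_iff.mpr hπ) (by simp [X_dvd_iff, hπ.ne_zero])
  have hassoc : Associated (A₁ * A₂) (C π ^ μ * toLaurent Q) := by
    rw [h, map_pow, mul_assoc]
    exact (associated_isUnit_mul_left_iff (isUnit_T β)).mpr (Associated.refl _)
  simpa only [map_pow] using
    exists_associated_pow_of_associated_mul (prime_toLaurent hQ hXQ) hCπ hassoc

end Laurent

section MonomialSubst

open LaurentPolynomial Finsupp

variable {σ R : Type*} [CommSemiring R]

/-- The substitution `X t ↦ Y ^ s t * T ^ r t`, where `Y` is the variable of `R[X]`. -/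
noncomputable def monomialSubst (s : σ → ℕ) (r : σ → ℤ) : MvPolynomial σ R →+* R[X][T;T⁻¹] :=
  MvPolynomial.eval₂Hom (LaurentPolynomial.C.comp Polynomial.C)
    fun t => LaurentPolynomial.C (X ^ s t) * T (r t)

theorem monomialSubst_monomial (s : σ → ℕ) (r : σ → ℤ) (m : σ →₀ ℕ) (e : R) :
    monomialSubst s r (MvPolynomial.monomial m e) =
      LaurentPolynomial.C (Polynomial.C e * X ^ weight s m) * T (weight r m) := by
  simp only [monomialSubst, MvPolynomial.eval₂Hom_monomial, ← single_eq_C_mul_T,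
    AddMonoidAlgebra.single_pow, AddMonoidAlgebra.finsuppProd_single]
  rw [RingHom.comp_apply, ← single_eq_C, AddMonoidAlgebra.single_mul_single, zero_add,
    weight_apply, weight_apply]
  congr 2
  simp only [Finsupp.prod, Finsupp.sum, ← pow_mul, Finset.prod_pow_eq_pow_sum, smul_eq_mul,
    mul_comm]

theorem coeff_coeff_monomialSubst (s : σ → ℕ) (r : σ → ℤ) (F : MvPolynomial σ R)
    {m : σ →₀ ℕ} (hm : ∀ m' ∈ F.support, weight s m' = weight s m → m' = m) :
    ((monomialSubst s r F).coeff (weight r m)).coeff (weight s m) = F.coeff m := by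
  classical
  conv_lhs => rw [F.as_sum, map_sum]
  simp only [monomialSubst_monomial, ← single_eq_C_mul_T, AddMonoidAlgebra.coeff_sum,
    Finsupp.coe_finsetSum, Finset.sum_apply, AddMonoidAlgebra.coeff_single, Finsupp.single_apply,
    finsetSum_coeff, apply_ite (Polynomial.coeff · (weight s m)), coeff_C_mul_X_pow, coeff_zero]
  rw [Finset.sum_eq_single m (fun b hb hbm => by
    simp [Ne.symm (mt (hm b hb) hbm)])
    (fun hm => by simp [MvPolynomial.notMem_support_iff.mp hm])]
  simp

theorem monomialSubst_trinomial (s : σ → ℕ) (r : σ → ℤ) {i j k : σ →₀ ℕ} (a b c : R)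
    {μ d : ℕ} (hμ : μ ≤ min (weight s i) (min (weight s j) (weight s k)))
    (hrj : weight r j = weight r i) (hrk : weight r k = weight r i + d) :
    monomialSubst s r (MvPolynomial.monomial i a + MvPolynomial.monomial j b +
        MvPolynomial.monomial k c) =
      T (weight r i) * LaurentPolynomial.C (X ^ μ) *
        toLaurent (Polynomial.C (Polynomial.C a * X ^ (weight s i - μ) +
          Polynomial.C b * X ^ (weight s j - μ)) +
          Polynomial.C (Polynomial.C c * X ^ (weight s k - μ)) * X ^ d) := by
  obtain ⟨x, hx⟩ := Nat.exists_eq_add_of_le (le_min_iff.mp hμ).1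
  obtain ⟨y, hy⟩ := Nat.exists_eq_add_of_le (le_min_iff.mp (le_min_iff.mp hμ).2).1
  obtain ⟨z, hz⟩ := Nat.exists_eq_add_of_le (le_min_iff.mp (le_min_iff.mp hμ).2).2
  simp only [map_add, monomialSubst_monomial, hx, hy, hz, hrj, hrk, Nat.add_sub_cancel_left,
    map_mul, toLaurent_C, toLaurent_X_pow, T_add, pow_add]
  ring

theorem support_subsingleton_of_associated_monomialSubst {K : Type*} [Field K] {s : σ → ℕ}
    {r : σ → ℤ} {F : MvPolynomial σ K} (hs : Set.InjOn (weight s) (F.support : Set (σ →₀ ℕ)))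
    {e : ℕ} (h : Associated (monomialSubst s r F) (LaurentPolynomial.C (X ^ e))) :
    (F.support : Set (σ →₀ ℕ)).Subsingleton := by
  obtain ⟨u, hu, z, hF⟩ := exists_eq_C_mul_T_of_associated_C h
  obtain ⟨c, -, rfl⟩ := Polynomial.isUnit_iff.mp hu
  have hweight : ∀ m ∈ F.support, weight s m = e := fun m hm => by
    have := coeff_coeff_monomialSubst s r F (fun m' hm' h => hs hm' hm h)
    by_contra hne
    rw [hF, ← single_eq_C_mul_T, AddMonoidAlgebra.coeff_single, Finsupp.single_apply, mul_comm,
      apply_ite (coeff · _), coeff_C_mul_X_pow, if_neg hne, coeff_zero, ite_self] at this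
    exact MvPolynomial.mem_support_iff.mp hm this.symm
  exact fun m hm m' hm' => hs hm hm' ((hweight m hm).trans (hweight m' hm').symm)

end MonomialSubst

section MvPolynomial

variable {σ K : Type*} [Field K]

theorem MvPolynomial.not_isUnit_of_mem_support {p : MvPolynomial σ K} {m₁ m₂ : σ →₀ ℕ}
    (h₁ : m₁ ∈ p.support) (h₂ : m₂ ∈ p.support) (hne : m₁ ≠ m₂) : ¬ IsUnit p := by
  rw [isUnit_iff_eq_C_of_isReduced]
  rintro ⟨r, -, rfl⟩
  rw [C_apply] at h₁ h₂
  exact hne ((Finset.mem_singleton.mp (support_monomial_subset h₁)).trans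
    (Finset.mem_singleton.mp (support_monomial_subset h₂)).symm)

theorem MvPolynomial.isUnit_of_dvd_of_support_subsingleton {F p : MvPolynomial σ K} (hFp : F ∣ p)
    (hF0 : F ≠ 0) (hF : (F.support : Set (σ →₀ ℕ)).Subsingleton)
    (hp : ∀ t, ∃ m ∈ p.support, m t = 0) : IsUnit F := by
  obtain ⟨v, hv⟩ := support_nonempty.mpr hF0
  have hFv : F = monomial v (F.coeff v) := by
    conv_lhs => rw [F.as_sum, Finset.eq_singleton_iff_unique_mem.mpr ⟨hv, fun m hm => hF hm hv⟩]
    exact Finset.sum_singleton _ _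
  -- `monomial v _` divides every term of `p`, so `v ≤ m` for all `m ∈ p.support`
  have hv0 : v = 0 := by
    ext t
    obtain ⟨m, hm, hmt⟩ := hp t
    obtain ⟨G, rfl⟩ := hFp
    rw [mem_support_iff, hFv, coeff_monomial_mul'] at hm
    have := (ite_ne_right_iff.mp hm).1 t
    simp only [Finsupp.coe_zero, Pi.zero_apply]
    omega
  rw [hFv, hv0, ← C_apply]
  exact (Ne.isUnit (mem_support_iff.mp (hv0 ▸ hv))).map C

theorem MvPolynomial.mem_support_trinomial {i j k : σ →₀ ℕ} {a b c : K} (ha : a ≠ 0)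
    (hb : b ≠ 0) (hc : c ≠ 0) (hij : i ≠ j) (hik : i ≠ k) (hjk : j ≠ k) :
    i ∈ (monomial i a + monomial j b + monomial k c).support ∧
      j ∈ (monomial i a + monomial j b + monomial k c).support ∧
      k ∈ (monomial i a + monomial j b + monomial k c).support := by
  classical
  simp [coeff_monomial, ha, hb, hc, hij, hik, hjk, hij.symm, hik.symm, hjk.symm]

end MvPolynomial

section Trinomial

open Finsupp

theorem exists_weight_eq_and_lt_of_not_collinear {σ : Type*} [Fintype σ] {i j k : σ →₀ ℕ}
    (hcol : ¬ Collinear ℝ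
      ({fun t => (i t : ℝ), fun t => (j t : ℝ), fun t => (k t : ℝ)} : Set (σ → ℝ))) :
    ∃ r : σ → ℤ, weight r j = weight r i ∧ weight r i < weight r k := by
  let toZ : (σ →₀ ℕ) → σ → ℤ := fun m t => m t
  have hind : ∀ α β : ℤ, α • (toZ j - toZ i) + β • (toZ k - toZ i) = 0 → α = 0 ∧ β = 0 := by
    intro α β h
    by_contra hαβ
    refine hcol (collinear_of_smul_sub_add_smul_sub_eq_zero (α := (α : ℝ)) (β := (β : ℝ)) ?_ ?_)
    · ext t
      simpa [toZ] using congrArg (Int.cast : ℤ → ℝ) (congrFun h t)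
    · simpa only [Int.cast_ne_zero] using not_and_or.mp hαβ
  obtain ⟨r, hrj, hrk⟩ := exists_dotProduct_eq_zero_and_pos _ _ hind
  simp only [dotProduct_sub, ← weight_eq_dotProduct, toZ, sub_eq_zero, sub_pos] at hrj hrk
  exact ⟨r, hrj, hrk⟩

theorem exists_associated_monomialSubst_of_trinomial_eq_mul {σ K : Type*} [Field K]
    [IsAlgClosed K] {i j k : σ →₀ ℕ} {a b c : K} (ha : a ≠ 0) (hb : b ≠ 0) (hc : c ≠ 0)
    {s : σ → ℕ} {r : σ → ℤ} (hs : (weight s i : K) ≠ weight s j)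
    (hrj : weight r j = weight r i) (hrk : weight r i < weight r k) {F G : MvPolynomial σ K}
    (hFG : MvPolynomial.monomial i a + MvPolynomial.monomial j b + MvPolynomial.monomial k c =
      F * G) :
    (∃ e, Associated (monomialSubst s r F) (LaurentPolynomial.C (X ^ e))) ∨
      ∃ e, Associated (monomialSubst s r G) (LaurentPolynomial.C (X ^ e)) := by
  obtain ⟨d, hd, hrkd⟩ : ∃ d : ℕ, 0 < d ∧ weight r k = weight r i + d :=
    ⟨(weight r k - weight r i).toNat, by omega, by omega⟩
  set μ := min (weight s i) (min (weight s j) (weight s k)) with hμ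
  have he : ((weight s i - μ : ℕ) : K) ≠ (weight s j - μ : ℕ) := by
    rwa [Nat.cast_sub (by omega), Nat.cast_sub (by omega), Ne, sub_left_inj]
  have hQ := irreducible_C_add_C_mul_X_pow_of_trinomial ha hb hc he
    (e₃ := weight s k - μ) (by omega) hd
  have hXQ : ¬ X ∣ C (C a * X ^ (weight s i - μ) + C b * X ^ (weight s j - μ)) +
      C (C c * X ^ (weight s k - μ)) * X ^ d := by
    rw [X_dvd_iff, coeff_add, coeff_C_zero, coeff_C_mul_X_pow, if_neg hd.ne, add_zero]
    have hne : weight s i - μ ≠ weight s j - μ := fun h => he (by rw [h])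
    intro h0
    simpa [coeff_X_pow, hne, ha] using congrArg (coeff · (weight s i - μ)) h0
  have hΦ := monomialSubst_trinomial s r a b c (μ := μ) le_rfl hrj hrkd
  rw [hFG, map_mul] at hΦ
  exact LaurentPolynomial.exists_associated_C_pow_of_mul_eq prime_X hQ.prime hXQ hΦ

theorem isUnit_or_isUnit_of_trinomial_eq_mul {K : Type*} [Field K] [IsAlgClosed K] {n : ℕ}
    {i j k : Fin n →₀ ℕ}
    (hcol : ¬ Collinear ℝ
      ({fun t => (i t : ℝ), fun t => (j t : ℝ), fun t => (k t : ℝ)} : Set (Fin n → ℝ)))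
    {t₀ : Fin n} (ht₀ : (i t₀ : K) ≠ j t₀) {a b c : K} (ha : a ≠ 0) (hb : b ≠ 0) (hc : c ≠ 0)
    (hP : ∀ t, ∃ m ∈ (MvPolynomial.monomial i a + MvPolynomial.monomial j b +
      MvPolynomial.monomial k c).support, m t = 0)
    {F G : MvPolynomial (Fin n) K}
    (hFG : MvPolynomial.monomial i a + MvPolynomial.monomial j b + MvPolynomial.monomial k c =
      F * G) : IsUnit F ∨ IsUnit G := by
  classical
  obtain ⟨r, hrj, hrk⟩ := exists_weight_eq_and_lt_of_not_collinear hcol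
  obtain ⟨s, hs, hsij⟩ := exists_weight_injOn_natCast_ne (F.support ∪ G.support ∪ {i, j})
    (by simp) (by simp) ht₀
  rw [hFG] at hP
  obtain ⟨m, hm, -⟩ := hP t₀
  have hF0 : F ≠ 0 := by rintro rfl; simp at hm
  have hG0 : G ≠ 0 := by rintro rfl; simp at hm
  rcases exists_associated_monomialSubst_of_trinomial_eq_mul ha hb hc hsij hrj hrk hFG
    with ⟨e, he⟩ | ⟨e, he⟩
  · refine .inl (MvPolynomial.isUnit_of_dvd_of_support_subsingleton (dvd_mul_right F G) hF0 ?_ hP)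
    exact support_subsingleton_of_associated_monomialSubst
      (hs.mono (Finset.coe_subset.mpr fun m hm => by simp [hm])) he
  · refine .inr (MvPolynomial.isUnit_of_dvd_of_support_subsingleton (dvd_mul_left G F) hG0 ?_ hP)
    exact support_subsingleton_of_associated_monomialSubst
      (hs.mono (Finset.coe_subset.mpr fun m hm => by simp [hm])) he

end Trinomial

theorem exists_natCast_apply_ne {K : Type*} [Field K] {n : ℕ} {i j k : Fin n →₀ ℕ} (hij : i ≠ j)
    (hinf : ∀ t, min (i t) (min (j t) (k t)) = 0)
    (hchar : ¬ ∃ p : ℕ, p.Prime ∧ CharP K p ∧ (∀ t, p ∣ i t) ∧ (∀ t, p ∣ j t) ∧ (∀ t, p ∣ k t)) :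
    (∃ t, (i t : K) ≠ j t) ∨ ∃ t, (i t : K) ≠ k t := by
  by_contra! h
  have hzero : ∀ t, (i t : K) = 0 := by
    intro t
    have := hinf t
    rcases (by omega : i t = 0 ∨ j t = 0 ∨ k t = 0) with h0 | h0 | h0
    · rw [h0, Nat.cast_zero]
    · rw [h.1 t, h0, Nat.cast_zero]
    · rw [h.2 t, h0, Nat.cast_zero]
  have hdvd : ∀ t, ringChar K ∣ i t ∧ ringChar K ∣ j t ∧ ringChar K ∣ k t := fun t => by
    simp only [← CharP.cast_eq_zero_iff K (ringChar K), ← h.1 t, ← h.2 t, hzero t, and_self]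
  rcases CharP.char_is_prime_or_zero K (ringChar K) with hp | h0
  · exact hchar ⟨_, hp, ringChar.charP K, fun t => (hdvd t).1, fun t => (hdvd t).2.1,
      fun t => (hdvd t).2.2⟩
  · refine hij (Finsupp.ext fun t => ?_)
    obtain ⟨hi, hj, -⟩ := hdvd t
    rw [h0, zero_dvd_iff] at hi hj
    rw [hi, hj]

theorem stmt16 {K : Type*} [Field K] [IsAlgClosed K] (n : ℕ) (i j k : Fin n →₀ ℕ)
    (hcol : ¬ Collinear ℝ
      ({fun t => (i t : ℝ), fun t => (j t : ℝ), fun t => (k t : ℝ)} : Set (Fin n → ℝ)))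
    (hinf : ∀ t, min (i t) (min (j t) (k t)) = 0)
    (hchar : ¬ ∃ p : ℕ, p.Prime ∧ CharP K p ∧
      (∀ t, p ∣ i t) ∧ (∀ t, p ∣ j t) ∧ (∀ t, p ∣ k t)) :
    ∀ a b c : K, a ≠ 0 → b ≠ 0 → c ≠ 0 →
      Irreducible (MvPolynomial.monomial i a + MvPolynomial.monomial j b +
        MvPolynomial.monomial k c) := by
  intro a b c ha hb hc
  obtain ⟨hIJ, hIK, hJK⟩ := ne_of_not_collinear hcol
  have hij : i ≠ j := by rintro rfl; exact hIJ rfl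
  have hik : i ≠ k := by rintro rfl; exact hIK rfl
  have hjk : j ≠ k := by rintro rfl; exact hJK rfl
  obtain ⟨hi, hj, hk⟩ := MvPolynomial.mem_support_trinomial ha hb hc hij hik hjk
  have hP : ∀ t, ∃ m ∈ (MvPolynomial.monomial i a + MvPolynomial.monomial j b +
      MvPolynomial.monomial k c).support, m t = 0 := fun t => by
    have := hinf t
    rcases (by omega : i t = 0 ∨ j t = 0 ∨ k t = 0) with h0 | h0 | h0
    exacts [⟨i, hi, h0⟩, ⟨j, hj, h0⟩, ⟨k, hk, h0⟩]
  refine ⟨MvPolynomial.not_isUnit_of_mem_support hi hj hij, fun F G hFG => ?_⟩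
  rcases exists_natCast_apply_ne hij hinf hchar with ⟨t₀, ht₀⟩ | ⟨t₀, ht₀⟩
  · exact isUnit_or_isUnit_of_trinomial_eq_mul hcol ht₀ ha hb hc hP hFG
  · rw [add_right_comm] at hP hFG
    exact isUnit_or_isUnit_of_trinomial_eq_mul (j := k) (k := j) (by rwa [Set.pair_comm]) ht₀
      ha hc hb hP hFG
end

section
/- Let K be an algebraically closed field, I', I'', I ⊆ ℕⁿ finite nonempty with I ⊆ I' + I'', ℓ: ℤⁿ → ℤ^m a linear map injective on I' + I'', and a', a'' ∈ ℤ^m with a' + ℓ(I') ⊆ ℕ^m and a'' + ℓ(I'') ⊆ ℕ^m. Then there exist P, Q ∈ K[X₁,…,Xₙ] with I(P) = I', I(Q) = I'', I(PQ) = I if and only if there exist P̃, Q̃ ∈ K[Y₁,…,Y_m] with I(P̃) = a' + ℓ(I'), I(Q̃) = a'' + ℓ(I''), I(P̃Q̃) = a' + a'' + ℓ(I). -/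
/-!
With ψ_a(i) := a + ℓ(i), we have ψ_{a'}(i) + ψ_{a''}(j) = ψ_{a'+a''}(i + j), and ψ_{a'+a''} is
injective on I' + I'' (so ψ_{a'} and ψ_{a''} are injective on I' and I'', by translating with an
element of the other set). Hence moving each coefficient of X^i to Y^{ψ(i)} preserves supports and
multiplication for polynomials supported on I' and I'', and every polynomial supported on
ψ_{a'}(I') arises in this way.
-/

open Pointwise

section

open Set

theorem AddMonoidHom.injOn_left_of_injOn_add {M N : Type*} [AddMonoid M] [IsRightCancelAdd M]
    [AddZeroClass N] (L : M →+ N) {s t : Set M} (hL : InjOn L (s + t)) {b : M} (hb : b ∈ t) :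
    InjOn L s := fun x hx y hy hxy =>
  add_right_cancel (hL (add_mem_add hx hb) (add_mem_add hy hb) (by rw [map_add, map_add, hxy]))

theorem AddMonoidHom.injOn_right_of_injOn_add {M N : Type*} [AddCommMonoid M] [IsRightCancelAdd M]
    [AddZeroClass N] (L : M →+ N) {s t : Set M} (hL : InjOn L (s + t)) {b : M} (hb : b ∈ s) :
    InjOn L t :=
  L.injOn_left_of_injOn_add (add_comm s t ▸ hL) hb

variable {σ τ : Type*}

def expToInt : (σ →₀ ℕ) →+ (σ → ℤ) where
  toFun d t := d t
  map_zero' := by ext; simp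
  map_add' d e := by ext; simp

@[simp]
theorem expToInt_apply (d : σ →₀ ℕ) (t : σ) : expToInt d t = d t := rfl

theorem expToInt_injective : Function.Injective (expToInt : (σ →₀ ℕ) →+ (σ → ℤ)) :=
  fun d e h => Finsupp.ext fun t => by simpa using congrFun h t

theorem add_affine_nonneg {M : Type*} [AddMonoid M] (L : M →+ τ → ℤ) {a b : τ → ℤ} {i j : M}
    (hi : ∀ t, 0 ≤ a t + L i t) (hj : ∀ t, 0 ≤ b t + L j t) (t : τ) :
    0 ≤ (a + b) t + L (i + j) t := by
  simp only [Pi.add_apply, map_add]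
  linarith [hi t, hj t]

section affineExp

variable {M : Type*} [Finite τ]

/-- The map `ψ_a` of the header, made `ℕ`-valued by truncation, harmless where `a + L i ≥ 0`. -/
noncomputable def affineExp (L : M → τ → ℤ) (a : τ → ℤ) (i : M) : τ →₀ ℕ :=
  Finsupp.equivFunOnFinite.symm fun t => (a t + L i t).toNat

theorem expToInt_affineExp {L : M → τ → ℤ} {a : τ → ℤ} {i : M} (h : ∀ t, 0 ≤ a t + L i t) :
    expToInt (affineExp L a i) = a + L i :=
  funext fun t => Int.toNat_of_nonneg (h t)

theorem affineExp_add_affineExp [AddMonoid M] (L : M →+ τ → ℤ) {a b : τ → ℤ} {i j : M}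
    (hi : ∀ t, 0 ≤ a t + L i t) (hj : ∀ t, 0 ≤ b t + L j t) :
    affineExp L a i + affineExp L b j = affineExp L (a + b) (i + j) := by
  apply expToInt_injective
  rw [map_add, expToInt_affineExp hi, expToInt_affineExp hj,
    expToInt_affineExp (add_affine_nonneg L hi hj), map_add]
  abel

theorem injOn_affineExp {L : M → τ → ℤ} {a : τ → ℤ} {s : Set M} (hL : InjOn L s)
    (h : ∀ i ∈ s, ∀ t, 0 ≤ a t + L i t) : InjOn (affineExp L a) s := fun x hx y hy hxy =>
  hL hx hy <| add_left_cancel <| by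
    rw [← expToInt_affineExp (h x hx), ← expToInt_affineExp (h y hy), hxy]

theorem image_expToInt_eq_image_iff [DecidableEq (τ →₀ ℕ)] {L : M → τ → ℤ} {a : τ → ℤ}
    {s : Finset (τ →₀ ℕ)} {I : Finset M} (h : ∀ i ∈ I, ∀ t, 0 ≤ a t + L i t) :
    expToInt '' ↑s = (fun i => a + L i) '' ↑I ↔ s = I.image (affineExp L a) := by
  have hI : (fun i => a + L i) '' ↑I = expToInt '' ↑(I.image (affineExp L a)) := by
    rw [Finset.coe_image, image_image]
    exact image_congr fun i hi => (expToInt_affineExp (h i hi)).symm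
  rw [hI, (image_injective.2 expToInt_injective).eq_iff, Finset.coe_inj]

end affineExp

namespace MvPolynomial
variable {R : Type*} [CommSemiring R]

/-- Moves the coefficient of `X^d` to `X^(f d)`, adding up coefficients along the fibres of `f`. -/
noncomputable def mapExponents (f : (σ →₀ ℕ) → (τ →₀ ℕ)) :
    MvPolynomial σ R →ₗ[R] MvPolynomial τ R :=
  AddMonoidAlgebra.mapDomainLinearMap R R f

theorem mapExponents_monomial (f : (σ →₀ ℕ) → (τ →₀ ℕ)) (d : σ →₀ ℕ) (r : R) :
    mapExponents f (monomial d r) = monomial (f d) r :=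
  AddMonoidAlgebra.mapDomainLinearMap_single ..

theorem support_mapExponents [DecidableEq τ] {f : (σ →₀ ℕ) → (τ →₀ ℕ)} {p : MvPolynomial σ R}
    (hf : InjOn f p.support) : (mapExponents f p).support = p.support.image f :=
  Finsupp.mapDomain_support_of_injOn (AddMonoidAlgebra.coeff p) hf

theorem mapExponents_mul_mapExponents {f g h : (σ →₀ ℕ) → (τ →₀ ℕ)} {p q : MvPolynomial σ R}
    (hfgh : ∀ i ∈ p.support, ∀ j ∈ q.support, f i + g j = h (i + j)) :
    mapExponents f p * mapExponents g q = mapExponents h (p * q) := by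
  calc mapExponents f p * mapExponents g q
      = ∑ i ∈ p.support, ∑ j ∈ q.support, monomial (f i + g j) (coeff i p * coeff j q) := by
        conv_lhs => rw [p.as_sum, q.as_sum]
        simp only [map_sum, mapExponents_monomial, Finset.sum_mul_sum, monomial_mul]
    _ = ∑ i ∈ p.support, ∑ j ∈ q.support, monomial (h (i + j)) (coeff i p * coeff j q) :=
        Finset.sum_congr rfl fun i hi => Finset.sum_congr rfl fun j hj => by rw [hfgh i hi j hj]
    _ = mapExponents h (p * q) := by
        conv_rhs => rw [p.as_sum, q.as_sum]
        simp only [Finset.sum_mul_sum, monomial_mul, map_sum, mapExponents_monomial]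

theorem exists_mapExponents_eq {f : (σ →₀ ℕ) → (τ →₀ ℕ)} {s : Set (σ →₀ ℕ)}
    {q : MvPolynomial τ R} (hq : ↑q.support ⊆ f '' s) :
    ∃ p : MvPolynomial σ R, ↑p.support ⊆ s ∧ mapExponents f p = q := by
  classical
  set g := Function.invFunOn f s
  refine ⟨∑ d ∈ q.support, monomial (g d) (coeff d q), fun i hi => ?_, ?_⟩
  · obtain ⟨d, hd, hi⟩ := Finset.mem_biUnion.1 (support_sum hi)
    rw [Finset.mem_singleton.1 (support_monomial_subset hi)]
    exact Function.invFunOn_mem (hq hd)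
  · conv_rhs => rw [q.as_sum]
    simp only [map_sum, mapExponents_monomial]
    exact Finset.sum_congr rfl fun d hd => by rw [Function.invFunOn_eq (hq hd)]

theorem exists_support_mul_iff_image [DecidableEq σ] [DecidableEq τ]
    {f' f'' f : (σ →₀ ℕ) → (τ →₀ ℕ)} {I' I'' I : Finset (σ →₀ ℕ)} (hI : I ⊆ I' + I'')
    (hf' : InjOn f' I') (hf'' : InjOn f'' I'') (hf : InjOn f ↑(I' + I''))
    (hadd : ∀ i ∈ I', ∀ j ∈ I'', f' i + f'' j = f (i + j)) :
    (∃ P Q : MvPolynomial σ R, P.support = I' ∧ Q.support = I'' ∧ (P * Q).support = I) ↔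
      ∃ P Q : MvPolynomial τ R, P.support = I'.image f' ∧ Q.support = I''.image f'' ∧
        (P * Q).support = I.image f := by
  constructor
  · rintro ⟨P, Q, rfl, rfl, hPQ⟩
    refine ⟨mapExponents f' P, mapExponents f'' Q, support_mapExponents hf',
      support_mapExponents hf'', ?_⟩
    rw [mapExponents_mul_mapExponents hadd, support_mapExponents (hf.mono (support_mul P Q)), hPQ]
  · rintro ⟨Pt, Qt, hPt, hQt, hPQt⟩
    obtain ⟨P, hP, rfl⟩ :=
      exists_mapExponents_eq (f := f') (s := I') (hPt ▸ Finset.coe_image.subset)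
    obtain ⟨Q, hQ, rfl⟩ :=
      exists_mapExponents_eq (f := f'') (s := I'') (hQt ▸ Finset.coe_image.subset)
    rw [support_mapExponents (hf'.mono hP)] at hPt
    rw [support_mapExponents (hf''.mono hQ)] at hQt
    obtain rfl := (Finset.image_eq_image_iff_of_injOn hf' hP subset_rfl).1 hPt
    obtain rfl := (Finset.image_eq_image_iff_of_injOn hf'' hQ subset_rfl).1 hQt
    rw [mapExponents_mul_mapExponents hadd, support_mapExponents (hf.mono (support_mul P Q))]
      at hPQt
    exact ⟨P, Q, rfl, rfl, (Finset.image_eq_image_iff_of_injOn hf (support_mul P Q) hI).1 hPQt⟩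

end MvPolynomial

end

theorem stmt19_general {K : Type*} [Field K] (n m : ℕ)
    (I' I'' I : Finset (Fin n →₀ ℕ)) (h' : I'.Nonempty) (h'' : I''.Nonempty)
    (hII : I ⊆ I' + I'')
    (ℓ : (Fin n → ℤ) →ₗ[ℤ] (Fin m → ℤ))
    (hinj : Set.InjOn (fun d => ℓ d)
      ((fun d : Fin n →₀ ℕ => fun t => (d t : ℤ)) '' ↑(I' + I'')))
    (a' a'' : Fin m → ℤ)
    (ha' : ∀ i ∈ I', ∀ t, 0 ≤ a' t + ℓ (fun u => (i u : ℤ)) t)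
    (ha'' : ∀ j ∈ I'', ∀ t, 0 ≤ a'' t + ℓ (fun u => (j u : ℤ)) t) :
    (∃ P Q : MvPolynomial (Fin n) K,
        P.support = I' ∧ Q.support = I'' ∧ (P * Q).support = I)
    ↔ (∃ Pt Qt : MvPolynomial (Fin m) K,
        ((fun d : Fin m →₀ ℕ => fun t => (d t : ℤ)) '' ↑Pt.support
          = (fun i : Fin n →₀ ℕ => a' + ℓ (fun u => (i u : ℤ))) '' ↑I') ∧
        ((fun d : Fin m →₀ ℕ => fun t => (d t : ℤ)) '' ↑Qt.support
          = (fun j : Fin n →₀ ℕ => a'' + ℓ (fun u => (j u : ℤ))) '' ↑I'') ∧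
        ((fun d : Fin m →₀ ℕ => fun t => (d t : ℤ)) '' ↑(Pt * Qt).support
          = (fun k : Fin n →₀ ℕ => a' + a'' + ℓ (fun u => (k u : ℤ))) '' ↑I)) := by
  classical
  set L := ℓ.toAddMonoidHom.comp expToInt
  have hL : Set.InjOn L (↑I' + ↑I'') :=
    Finset.coe_add I' I'' ▸ hinj.comp expToInt_injective.injOn (Set.mapsTo_image _ _)
  obtain ⟨i₀, hi₀⟩ := h'
  obtain ⟨j₀, hj₀⟩ := h''
  have hsum : ∀ k ∈ I' + I'', ∀ t, 0 ≤ (a' + a'') t + L k t := by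
    intro k hk
    obtain ⟨i, hi, j, hj, rfl⟩ := Finset.mem_add.1 hk
    exact add_affine_nonneg L (ha' i hi) (ha'' j hj)
  refine (MvPolynomial.exists_support_mul_iff_image hII
    (injOn_affineExp (L.injOn_left_of_injOn_add hL hj₀) ha')
    (injOn_affineExp (L.injOn_right_of_injOn_add hL hi₀) ha'')
    (injOn_affineExp (Finset.coe_add I' I'' ▸ hL) hsum)
    fun i hi j hj => affineExp_add_affineExp L (ha' i hi) (ha'' j hj)).trans ?_
  exact exists₂_congr fun P Q => and_congr (image_expToInt_eq_image_iff ha').symm <|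
    and_congr (image_expToInt_eq_image_iff ha'').symm
      (image_expToInt_eq_image_iff fun k hk => hsum k (hII hk)).symm

theorem stmt19 {K : Type*} [Field K] [IsAlgClosed K] (n m : ℕ)
    (I' I'' I : Finset (Fin n →₀ ℕ)) (h' : I'.Nonempty) (h'' : I''.Nonempty)
    (hne : I.Nonempty) (hII : I ⊆ I' + I'')
    (ℓ : (Fin n → ℤ) →ₗ[ℤ] (Fin m → ℤ))
    (hinj : Set.InjOn (fun d => ℓ d)
      ((fun d : Fin n →₀ ℕ => fun t => (d t : ℤ)) '' ↑(I' + I'')))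
    (a' a'' : Fin m → ℤ)
    (ha' : ∀ i ∈ I', ∀ t, 0 ≤ a' t + ℓ (fun u => (i u : ℤ)) t)
    (ha'' : ∀ j ∈ I'', ∀ t, 0 ≤ a'' t + ℓ (fun u => (j u : ℤ)) t) :
    (∃ P Q : MvPolynomial (Fin n) K,
        P.support = I' ∧ Q.support = I'' ∧ (P * Q).support = I)
    ↔ (∃ Pt Qt : MvPolynomial (Fin m) K,
        ((fun d : Fin m →₀ ℕ => fun t => (d t : ℤ)) '' ↑Pt.support
          = (fun i : Fin n →₀ ℕ => a' + ℓ (fun u => (i u : ℤ))) '' ↑I') ∧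
        ((fun d : Fin m →₀ ℕ => fun t => (d t : ℤ)) '' ↑Qt.support
          = (fun j : Fin n →₀ ℕ => a'' + ℓ (fun u => (j u : ℤ))) '' ↑I'') ∧
        ((fun d : Fin m →₀ ℕ => fun t => (d t : ℤ)) '' ↑(Pt * Qt).support
          = (fun k : Fin n →₀ ℕ => a' + a'' + ℓ (fun u => (k u : ℤ))) '' ↑I)) :=
  stmt19_general n m I' I'' I h' h'' hII ℓ hinj a' a'' ha' ha''
end
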